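/- arXiv:2007.09874 — 7 statements merged into one kernel-verified Lean document; each statement's English description precedes it below -/
import Mathlib

section
/- For every dimension d ≥ 1 and every k with 0 ≤ k ≤ d-1, there exists a constant c_d > 0 (depending only on d) such that for all ε ∈ (0,1), every (k,ε)-net for [0,1]^d has cardinality at least c_d / ε^{1 - k/d}. -/
/-!
Put `s = ε^(1/d)`. Through every point of the cube passes an axis-parallel box of side `s`
contained in the cube; it is compact, convex and of volume `ε`, so a flat of the net meets it.
Hence the `√d s`-neighbourhoods of the flats cover the cube. Inside the cube, the neighbourhood of
a `k`-flat sits in the product of a `k`-ball of radius `2√d` along the flat and a `(d-k)`-ball of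
radius `√d s` across it, so its volume is at most `(4√d)^d s^(d-k) = (4√d)^d ε^(1-k/d)`.
The cube has volume `1`, so the net has at least `(4√d)^(-d) ε^(-(1-k/d))` flats.
-/

open MeasureTheory

noncomputable section

/-- The unit cube `[0,1]^d` in `ℝ^d`. -/
def unitCube (d : ℕ) : Set (EuclideanSpace ℝ (Fin d)) :=
  {x | ∀ i, x i ∈ Set.Icc (0 : ℝ) 1}

/-- A `k`-flat in `ℝ^d`: a (nonempty) affine subspace of dimension `k`. -/
def IsKFlat (d k : ℕ) (f : AffineSubspace ℝ (EuclideanSpace ℝ (Fin d))) : Prop :=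
  (f : Set (EuclideanSpace ℝ (Fin d))).Nonempty ∧ Module.finrank ℝ f.direction = k

/-- A family `S` of flats is a `(k,ε)`-net for `[0,1]^d` if every compact convex set `Ξ`
with `vol (Ξ ∩ [0,1]^d) ≥ ε` is intersected by some flat of `S`. -/
def IsKENet (d : ℕ) (ε : ℝ)
    (S : Set (AffineSubspace ℝ (EuclideanSpace ℝ (Fin d)))) : Prop :=
  ∀ Ξ : Set (EuclideanSpace ℝ (Fin d)), IsCompact Ξ → Convex ℝ Ξ →
    ENNReal.ofReal ε ≤ volume (Ξ ∩ unitCube d) →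
    ∃ f ∈ S, (Ξ ∩ (f : Set (EuclideanSpace ℝ (Fin d)))).Nonempty

open Metric Module

section InnerProductSpace

variable {E : Type*} [NormedAddCommGroup E] [InnerProductSpace ℝ E] [FiniteDimensional ℝ E]

theorem ofReal_norm_orthogonalProjectionOnto_orthogonal_sub_le_infEDist
    (f : AffineSubspace ℝ E) {a : E} (ha : a ∈ f) (x : E) :
    ENNReal.ofReal ‖f.directionᗮ.orthogonalProjectionOnto (x - a)‖ ≤
      infEDist x (f : Set E) := by
  refine le_infEDist.2 fun y hy => ?_
  have hya : y - a ∈ f.direction := AffineSubspace.vsub_mem_direction hy ha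
  have : f.directionᗮ.orthogonalProjectionOnto (x - a) =
      f.directionᗮ.orthogonalProjectionOnto (x - y) := by
    rw [← sub_add_sub_cancel x y a, map_add,
      Submodule.orthogonalProjectionOnto_orthogonal_apply_eq_zero hya, add_zero]
  rw [this, edist_dist, dist_eq_norm]
  exact ENNReal.ofReal_le_ofReal (Submodule.norm_orthogonalProjectionOnto_apply_le _ _)

variable [MeasurableSpace E] [BorelSpace E]

theorem volume_closedBall_le (x : E) {r : ℝ} (hr : 0 ≤ r) :
    volume (closedBall x r) ≤ ENNReal.ofReal ((2 * r) ^ finrank ℝ E) := by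
  set b := stdOrthonormalBasis ℝ E
  have hsub : closedBall (b.repr x) r ⊆ WithLp.ofLp ⁻¹' closedBall (b.repr x).ofLp r := by
    intro y hy
    rw [Set.mem_preimage, mem_closedBall, dist_pi_le_iff hr]
    intro i
    rw [mem_closedBall, dist_eq_norm] at hy
    exact (PiLp.norm_apply_le (y - b.repr x) i).trans hy
  calc volume (closedBall x r)
      = volume (b.repr.symm ⁻¹' closedBall x r) :=
        (b.measurePreserving_repr_symm.measure_preimage
          measurableSet_closedBall.nullMeasurableSet).symm
    _ ≤ volume (WithLp.ofLp ⁻¹' closedBall (b.repr x).ofLp r) := by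
        rw [LinearIsometryEquiv.preimage_closedBall, LinearIsometryEquiv.symm_symm]
        exact measure_mono hsub
    _ = ENNReal.ofReal ((2 * r) ^ finrank ℝ E) := by
        rw [(PiLp.volume_preserving_ofLp _).measure_preimage
          measurableSet_closedBall.nullMeasurableSet, Real.volume_pi_closedBall _ hr,
          Fintype.card_fin, finrank_eq_card_basis b.toBasis]

theorem volume_closedBall_inter_cthickening_le (f : AffineSubspace ℝ E) {a : E} (ha : a ∈ f)
    {R r : ℝ} (hR : 0 ≤ R) (hr : 0 ≤ r) :
    volume (closedBall a R ∩ cthickening r (f : Set E)) ≤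
      ENNReal.ofReal ((2 * R) ^ finrank ℝ f.direction * (2 * r) ^ finrank ℝ f.directionᗮ) := by
  set e := f.direction.measurableEquivProd a
  have he : MeasurePreserving e volume volume := by
    simpa [InnerProductSpace.euclideanHausdorffMeasure_eq_volume] using
      f.direction.measurePreserving_measurableEquivProd a
  have hsub : closedBall a R ∩ cthickening r (f : Set E) ⊆
      e ⁻¹' (closedBall 0 R ×ˢ closedBall 0 r) := by
    rintro x ⟨hxR, hxr⟩
    simp only [Set.mem_preimage, Submodule.measurableEquivProd_apply, vsub_eq_sub, e,
      Set.mem_prod, mem_closedBall, dist_zero_right]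
    constructor
    · exact (Submodule.norm_orthogonalProjectionOnto_apply_le _ _).trans
        (by rwa [← dist_eq_norm])
    · exact (ENNReal.ofReal_le_ofReal_iff hr).1
        ((ofReal_norm_orthogonalProjectionOnto_orthogonal_sub_le_infEDist f ha x).trans
          (mem_cthickening_iff.1 hxr))
  calc volume (closedBall a R ∩ cthickening r (f : Set E))
      ≤ volume (closedBall (0 : f.direction) R ×ˢ closedBall (0 : f.directionᗮ) r) := by
        rw [← he.measure_preimage_equiv]; exact measure_mono hsub
    _ = volume (closedBall (0 : f.direction) R) * volume (closedBall (0 : f.directionᗮ) r) := by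
        rw [Measure.volume_eq_prod, Measure.prod_prod]
    _ ≤ _ := by
        rw [ENNReal.ofReal_mul (by positivity)]
        exact mul_le_mul' (volume_closedBall_le _ hR) (volume_closedBall_le _ hr)

end InnerProductSpace

namespace EuclideanSpace

variable {ι : Type*}

def box (l u : ι → ℝ) : Set (EuclideanSpace ℝ ι) := WithLp.ofLp ⁻¹' Set.Icc l u

theorem mem_box {l u : ι → ℝ} {x : EuclideanSpace ℝ ι} :
    x ∈ box l u ↔ ∀ i, x i ∈ Set.Icc (l i) (u i) := by
  simp only [box, Set.mem_preimage, Set.mem_Icc, Pi.le_def, forall_and]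

theorem isCompact_box (l u : ι → ℝ) : IsCompact (box l u) :=
  (PiLp.homeomorph 2 _).isCompact_preimage.2 isCompact_Icc

theorem convex_box (l u : ι → ℝ) : Convex ℝ (box l u) :=
  (convex_Icc l u).linear_preimage (WithLp.linearEquiv 2 ℝ (ι → ℝ)).toLinearMap

variable [Fintype ι]

theorem volume_box (l u : ι → ℝ) : volume (box l u) = ∏ i, ENNReal.ofReal (u i - l i) := by
  rw [box, (PiLp.volume_preserving_ofLp ι).measure_preimage measurableSet_Icc.nullMeasurableSet,
    Real.volume_Icc_pi]

theorem dist_le_sqrt_card_mul {x y : EuclideanSpace ℝ ι} {c : ℝ} (hc : 0 ≤ c)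
    (h : ∀ i, |x i - y i| ≤ c) : dist x y ≤ √(Fintype.card ι) * c := by
  rw [EuclideanSpace.dist_eq, ← Real.sqrt_sq hc, ← Real.sqrt_mul (Nat.cast_nonneg _)]
  refine Real.sqrt_le_sqrt ?_
  calc ∑ i, dist (x i) (y i) ^ 2 ≤ ∑ _i : ι, c ^ 2 :=
        Finset.sum_le_sum fun i _ => pow_le_pow_left₀ (abs_nonneg _) (h i) 2
    _ = Fintype.card ι * c ^ 2 := by simp

theorem dist_le_of_mem_box {l u : ι → ℝ} {s : ℝ} (hs : 0 ≤ s) (hlu : ∀ i, u i - l i ≤ s)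
    {x y : EuclideanSpace ℝ ι} (hx : x ∈ box l u) (hy : y ∈ box l u) :
    dist x y ≤ √(Fintype.card ι) * s := by
  refine dist_le_sqrt_card_mul hs fun i => abs_sub_le_iff.2 ?_
  have hxi := mem_box.1 hx i
  have hyi := mem_box.1 hy i
  simp only [Set.mem_Icc] at hxi hyi
  constructor <;> linarith [hlu i]

end EuclideanSpace

open EuclideanSpace

theorem unitCube_eq_box (d : ℕ) : unitCube d = box 0 1 := by
  ext x; simp [unitCube, mem_box]

theorem volume_unitCube (d : ℕ) : volume (unitCube d) = 1 := by
  simp [unitCube_eq_box, volume_box]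

theorem IsKFlat.le_dim {d k : ℕ} {f : AffineSubspace ℝ (EuclideanSpace ℝ (Fin d))}
    (hf : IsKFlat d k f) : k ≤ d :=
  hf.2 ▸ (Submodule.finrank_le f.direction).trans_eq finrank_euclideanSpace_fin

theorem measure_le_card_mul_of_subset_biUnion {α ι : Type*} [MeasurableSpace α] {μ : Measure α}
    {A : Set α} {S : Finset ι} {T : ι → Set α} {b : ENNReal} (hA : A ⊆ ⋃ i ∈ S, T i)
    (hT : ∀ i ∈ S, μ (T i ∩ A) ≤ b) : μ A ≤ S.card * b := by
  have hA' : A ⊆ ⋃ i ∈ S, T i ∩ A := fun x hx => by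
    obtain ⟨i, hi, hxi⟩ := Set.mem_iUnion₂.1 (hA hx)
    exact Set.mem_iUnion₂.2 ⟨i, hi, hxi, hx⟩
  calc μ A ≤ ∑ i ∈ S, μ (T i ∩ A) := (measure_mono hA').trans (measure_biUnion_finset_le _ _)
    _ ≤ ∑ _i ∈ S, b := Finset.sum_le_sum hT
    _ = S.card * b := by rw [Finset.sum_const, nsmul_eq_mul]

theorem IsKENet.unitCube_subset_biUnion_cthickening {d : ℕ} {ε s : ℝ}
    {S : Set (AffineSubspace ℝ (EuclideanSpace ℝ (Fin d)))} (hS : IsKENet d ε S)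
    (hs0 : 0 ≤ s) (hs1 : s ≤ 1) (hε : ε ≤ s ^ d) :
    unitCube d ⊆ ⋃ f ∈ S, cthickening (√d * s) (f : Set (EuclideanSpace ℝ (Fin d))) := by
  intro x hx
  set l : Fin d → ℝ := fun i => min (x i) (1 - s)
  have hbox : box l (fun i => l i + s) ⊆ unitCube d := fun y hy i => by
    have hyi := mem_box.1 hy i
    have hxi := hx i
    simp only [Set.mem_Icc, l] at hxi hyi ⊢
    constructor <;> linarith [min_le_right (x i) (1 - s), le_min hxi.1 (by linarith : 0 ≤ 1 - s)]
  have hx_mem : x ∈ box l (fun i => l i + s) := mem_box.2 fun i => by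
    simp only [Set.mem_Icc, l]
    constructor
    · exact min_le_left _ _
    · rcases min_choice (x i) (1 - s) with h | h <;> rw [h] <;> linarith [(hx i).2]
  have hvol : ENNReal.ofReal ε ≤ volume (box l (fun i => l i + s) ∩ unitCube d) := by
    rw [Set.inter_eq_left.2 hbox, volume_box]
    simp only [add_sub_cancel_left, Finset.prod_const, Finset.card_univ, Fintype.card_fin,
      ← ENNReal.ofReal_pow hs0]
    exact ENNReal.ofReal_le_ofReal hε
  obtain ⟨f, hf, z, hz, hzf⟩ := hS _ (isCompact_box _ _) (convex_box _ _) hvol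
  have hxz := dist_le_of_mem_box hs0 (fun i => (add_sub_cancel_left _ _).le) hx_mem hz
  rw [Fintype.card_fin] at hxz
  exact Set.mem_biUnion hf (mem_cthickening_of_dist_le x z _ _ hzf hxz)

theorem IsKFlat.volume_cthickening_inter_unitCube_le {d k : ℕ}
    {f : AffineSubspace ℝ (EuclideanSpace ℝ (Fin d))} (hf : IsKFlat d k f) {s : ℝ}
    (hs0 : 0 ≤ s) (hs1 : s ≤ 1) :
    volume (cthickening (√d * s) (f : Set (EuclideanSpace ℝ (Fin d))) ∩ unitCube d) ≤
      ENNReal.ofReal ((4 * √d) ^ d * s ^ (d - k)) := by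
  set r := √d * s
  have hr : 0 ≤ r := by positivity
  have hrd : r ≤ √d := mul_le_of_le_one_right (Real.sqrt_nonneg _) hs1
  rcases (cthickening r (f : Set (EuclideanSpace ℝ (Fin d))) ∩ unitCube d).eq_empty_or_nonempty
    with h | ⟨x₁, hx₁f, hx₁⟩
  · simp [h]
  rw [f.closed_of_finiteDimensional.cthickening_eq_biUnion_closedBall hr] at hx₁f
  obtain ⟨a, ha, hx₁a⟩ := Set.mem_iUnion₂.1 hx₁f
  have hsub : cthickening r (f : Set (EuclideanSpace ℝ (Fin d))) ∩ unitCube d ⊆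
      closedBall a (2 * √d) ∩ cthickening r (f : Set (EuclideanSpace ℝ (Fin d))) := by
    rintro x ⟨hxf, hx⟩
    refine ⟨?_, hxf⟩
    have hxx₁ := dist_le_of_mem_box (l := 0) (u := 1) zero_le_one (fun i => by simp)
      (unitCube_eq_box d ▸ hx) (unitCube_eq_box d ▸ hx₁)
    rw [Fintype.card_fin, mul_one] at hxx₁
    rw [mem_closedBall] at hx₁a ⊢
    linarith [dist_triangle x x₁ a]
  have hcodim : finrank ℝ f.directionᗮ = d - k := by
    have := f.direction.finrank_add_finrank_orthogonal
    rw [hf.2, finrank_euclideanSpace_fin] at this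
    omega
  refine (measure_mono hsub).trans <|
    (volume_closedBall_inter_cthickening_le f ha (by positivity) hr).trans ?_
  rw [hf.2, hcodim]
  refine ENNReal.ofReal_le_ofReal ?_
  calc (2 * (2 * √d)) ^ k * (2 * r) ^ (d - k)
      = (4 * √d) ^ k * (2 * √d) ^ (d - k) * s ^ (d - k) := by ring
    _ ≤ (4 * √d) ^ k * (4 * √d) ^ (d - k) * s ^ (d - k) := by gcongr; linarith [Real.sqrt_nonneg d]
    _ = (4 * √d) ^ d * s ^ (d - k) := by rw [← pow_add, Nat.add_sub_cancel' hf.le_dim]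

theorem lower_bound_kenet_general (d k : ℕ) (hd : 1 ≤ d) :
    ∃ c : ℝ, 0 < c ∧ ∀ ε : ℝ, ε ∈ Set.Ioo (0 : ℝ) 1 →
      ∀ S : Finset (AffineSubspace ℝ (EuclideanSpace ℝ (Fin d))),
        (∀ f ∈ S, IsKFlat d k f) →
        IsKENet d ε (S : Set (AffineSubspace ℝ (EuclideanSpace ℝ (Fin d)))) →
        c / ε ^ ((1 : ℝ) - (k : ℝ) / (d : ℝ)) ≤ (S.card : ℝ) := by
  refine ⟨((4 * √d) ^ d)⁻¹, by positivity, ?_⟩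
  rintro ε ⟨hε0, hε1⟩ S hflats hnet
  have hd0 : (d : ℝ) ≠ 0 := by positivity
  set s := ε ^ ((1 : ℝ) / d)
  have hs0 : 0 ≤ s := by positivity
  have hs1 : s ≤ 1 := Real.rpow_le_one hε0.le hε1.le (by positivity)
  have hsd : s ^ d = ε := by
    rw [← Real.rpow_natCast, ← Real.rpow_mul hε0.le, one_div_mul_cancel hd0, Real.rpow_one]
  have hcover := hnet.unitCube_subset_biUnion_cthickening hs0 hs1 hsd.ge
  obtain ⟨f, hf, -⟩ := Set.mem_iUnion₂.1 (hcover (show 0 ∈ unitCube d from fun i => by simp))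
  have hkd : k ≤ d := (hflats f hf).le_dim
  have hsε : s ^ (d - k) = ε ^ ((1 : ℝ) - k / d) := by
    rw [← Real.rpow_natCast, ← Real.rpow_mul hε0.le, Nat.cast_sub hkd]
    congr 1
    field_simp
  have hcount := measure_le_card_mul_of_subset_biUnion hcover fun f hf =>
    (hflats f hf).volume_cthickening_inter_unitCube_le hs0 hs1
  rw [volume_unitCube, ← ENNReal.ofReal_natCast, ← ENNReal.ofReal_mul (by positivity),
    ENNReal.one_le_ofReal, hsε] at hcount
  rw [div_le_iff₀ (by positivity)]
  calc ((4 * √d) ^ d)⁻¹ = ((4 * √d) ^ d)⁻¹ * 1 := (mul_one _).symm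
    _ ≤ ((4 * √d) ^ d)⁻¹ * (S.card * ((4 * √d) ^ d * ε ^ ((1 : ℝ) - k / d))) := by gcongr
    _ = S.card * ε ^ ((1 : ℝ) - k / d) := by field_simp

/-- Any `(k,ε)`-net for `[0,1]^d` has size at least `c_d / ε^(1 - k/d)`. -/
theorem lower_bound_kenet (d k : ℕ) (hd : 1 ≤ d) (hk : k ≤ d - 1) :
    ∃ c : ℝ, 0 < c ∧ ∀ ε : ℝ, ε ∈ Set.Ioo (0 : ℝ) 1 →
      ∀ S : Finset (AffineSubspace ℝ (EuclideanSpace ℝ (Fin d))),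
        (∀ f ∈ S, IsKFlat d k f) →
        IsKENet d ε (S : Set (AffineSubspace ℝ (EuclideanSpace ℝ (Fin d)))) →
        c / ε ^ ((1 : ℝ) - (k : ℝ) / (d : ℝ)) ≤ (S.card : ℝ) :=
  lower_bound_kenet_general d k hd
end
end

section
/- Let d ≥ 1 and 0 ≤ k ≤ d-1. For every k-flat f in ℝ^d and every r > 0, the d-dimensional Lebesgue volume of the set {x ∈ [0,1]^d : dist(x, f) ≤ r} is at most d^{k/2} · ω_{d-k} · r^{d-k}, where ω_{d-k} denotes the Lebesgue volume of the Euclidean unit ball in ℝ^{d-k}. -/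
/-! The cube lies in the ball of radius `√d / 2` about its centre. Split `ℝ^d` isometrically,
hence volume-preservingly, as `K × Kᗮ`, where `K` is the direction of the flat. A point of that
ball within distance `r` of the flat projects into a ball of radius `√d / 2` in `K`, which lies in
a cube of volume `d^(k/2)`, and into a ball of radius `r` in `Kᗮ`, of volume `ω_{d-k} r^(d-k)`. -/

open MeasureTheory

noncomputable section

open Metric Module

section
variable {E : Type*} [NormedAddCommGroup E] [InnerProductSpace ℝ E]

theorem AffineSubspace.dist_orthogonalProjectionOnto_orthogonal_le_infDist
    (s : AffineSubspace ℝ E) [s.direction.HasOrthogonalProjection] {p : E} (hp : p ∈ s) (x : E) :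
    dist (s.directionᗮ.orthogonalProjectionOnto x) (s.directionᗮ.orthogonalProjectionOnto p) ≤
      infDist x s := by
  have : Nonempty s := ⟨⟨p, hp⟩⟩
  set q : E := (EuclideanGeometry.orthogonalProjection s x : E)
  have hq : s.directionᗮ.orthogonalProjectionOnto q = s.directionᗮ.orthogonalProjectionOnto p := by
    rw [← sub_eq_zero, ← map_sub]
    exact Submodule.orthogonalProjectionOnto_orthogonal_apply_eq_zero
      (s.vsub_mem_direction (EuclideanGeometry.orthogonalProjection_mem x) hp)
  rw [← hq, ← EuclideanGeometry.dist_orthogonalProjection_eq_infDist, dist_eq_norm, dist_eq_norm,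
    ← map_sub]
  exact Submodule.norm_orthogonalProjectionOnto_apply_le _ _

theorem Submodule.dist_orthogonalProjectionOnto_le (K : Submodule ℝ E) [K.HasOrthogonalProjection]
    (x y : E) : dist (K.orthogonalProjectionOnto x) (K.orthogonalProjectionOnto y) ≤ dist x y := by
  rw [dist_eq_norm, dist_eq_norm, ← map_sub]
  exact K.norm_orthogonalProjectionOnto_apply_le _

variable [FiniteDimensional ℝ E] [MeasurableSpace E] [BorelSpace E]

theorem Submodule.measurePreserving_prod_orthogonalProjectionOnto (K : Submodule ℝ E) :
    MeasurePreserving (fun x ↦ (K.orthogonalProjectionOnto x, Kᗮ.orthogonalProjectionOnto x)) := by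
  convert (WithLp.volume_preserving_ofLp K Kᗮ).comp K.orthogonalDecomposition.measurePreserving
  all_goals rw [Function.comp_apply, Submodule.orthogonalDecomposition_apply]

theorem InnerProductSpace.volume_closedBall_le_pow (x : E) {r : ℝ} (hr : 0 ≤ r) :
    volume (closedBall x r) ≤ ENNReal.ofReal (2 * r) ^ finrank ℝ E := by
  let b := stdOrthonormalBasis ℝ E
  let φ : E → Fin (finrank ℝ E) → ℝ := fun y ↦ WithLp.ofLp (b.repr y)
  have hφ : MeasurePreserving φ := (PiLp.volume_preserving_ofLp _).comp b.measurePreserving_repr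
  have hφ_lip : LipschitzWith 1 φ := by
    have := (PiLp.lipschitzWith_ofLp 2 (fun _ : Fin (finrank ℝ E) ↦ ℝ)).comp b.repr.lipschitz
    rwa [mul_one] at this
  calc volume (closedBall x r) ≤ volume (φ ⁻¹' closedBall (φ x) r) :=
        measure_mono fun y hy ↦ by simpa using (hφ_lip.dist_le_mul y x).trans (by simpa using hy)
    _ = ENNReal.ofReal (2 * r) ^ finrank ℝ E := by
        rw [hφ.measure_preimage measurableSet_closedBall.nullMeasurableSet,
          Real.volume_pi_closedBall _ hr, Fintype.card_fin, ENNReal.ofReal_pow (by linarith)]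

theorem InnerProductSpace.volume_closedBall_zero_eq_of_finrank_eq {F : Type*}
    [NormedAddCommGroup F] [InnerProductSpace ℝ F] [FiniteDimensional ℝ F] [MeasurableSpace F]
    [BorelSpace F] (h : finrank ℝ E = finrank ℝ F) (r : ℝ) :
    volume (closedBall (0 : E) r) = volume (closedBall (0 : F) r) := by
  let e : F ≃ₗᵢ[ℝ] E :=
    (stdOrthonormalBasis ℝ F).repr.trans ((stdOrthonormalBasis ℝ E).reindex (finCongr h)).repr.symm
  rw [← e.measurePreserving.measure_preimage measurableSet_closedBall.nullMeasurableSet,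
    e.preimage_closedBall, map_zero]

theorem AffineSubspace.volume_closedBall_inter_infDist_le (s : AffineSubspace ℝ E) {p : E}
    (hp : p ∈ s) (c : E) {R : ℝ} (hR : 0 ≤ R) (r : ℝ) :
    volume {x | x ∈ closedBall c R ∧ infDist x s ≤ r} ≤
      ENNReal.ofReal (2 * R) ^ finrank ℝ s.direction *
        volume (closedBall (0 : s.directionᗮ) r) := by
  set K := s.direction
  let ψ := fun x ↦ (K.orthogonalProjectionOnto x, Kᗮ.orthogonalProjectionOnto x)
  have hsub : {x | x ∈ closedBall c R ∧ infDist x s ≤ r} ⊆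
      ψ ⁻¹' (closedBall (ψ c).1 R ×ˢ closedBall (ψ p).2 r) := fun x ⟨hxc, hxs⟩ ↦
    ⟨(K.dist_orthogonalProjectionOnto_le x c).trans hxc,
      (s.dist_orthogonalProjectionOnto_orthogonal_le_infDist hp x).trans hxs⟩
  calc volume {x | x ∈ closedBall c R ∧ infDist x s ≤ r}
      ≤ volume (closedBall (ψ c).1 R ×ˢ closedBall (ψ p).2 r) := by
        rw [← (K.measurePreserving_prod_orthogonalProjectionOnto).measure_preimage
          (measurableSet_closedBall.prod measurableSet_closedBall).nullMeasurableSet]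
        exact measure_mono hsub
    _ = volume (closedBall (ψ c).1 R) * volume (closedBall (0 : Kᗮ) r) := by
        rw [Measure.volume_eq_prod, Measure.prod_prod,
          Measure.addHaar_closedBall_center volume (ψ p).2]
    _ ≤ _ := by gcongr; exact InnerProductSpace.volume_closedBall_le_pow _ hR

end

theorem unitCube_subset_closedBall (d : ℕ) :
    unitCube d ⊆ closedBall (WithLp.toLp 2 fun _ ↦ 1 / 2) (√d / 2) := by
  intro x hx
  have hcoord : ∀ i, dist (x i) (1 / 2) ^ 2 ≤ (1 / 2) ^ 2 := fun i ↦ by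
    obtain ⟨h0, h1⟩ := hx i
    rw [Real.dist_eq, sq_le_sq₀ (abs_nonneg _) (by norm_num)]
    exact abs_sub_le_iff.2 ⟨by linarith, by linarith⟩
  calc dist x (WithLp.toLp 2 fun _ ↦ 1 / 2) ≤ √(∑ _i : Fin d, (1 / 2 : ℝ) ^ 2) := by
        rw [EuclideanSpace.dist_eq]
        exact Real.sqrt_le_sqrt (Finset.sum_le_sum fun i _ ↦ hcoord i)
    _ = √d / 2 := by
        rw [Finset.sum_const, Finset.card_univ, Fintype.card_fin, nsmul_eq_mul,
          Real.sqrt_mul (Nat.cast_nonneg d), Real.sqrt_sq (by norm_num)]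
        ring

theorem volume_tube_le_general (d k : ℕ)
    (f : AffineSubspace ℝ (EuclideanSpace ℝ (Fin d))) (hf : IsKFlat d k f)
    (r : ℝ) (hr : 0 < r) :
    volume {x | x ∈ unitCube d ∧
        Metric.infDist x (f : Set (EuclideanSpace ℝ (Fin d))) ≤ r} ≤
      ENNReal.ofReal ((d : ℝ) ^ ((k : ℝ) / 2) *
        (volume (Metric.closedBall (0 : EuclideanSpace ℝ (Fin (d - k))) 1)).toReal *
        r ^ (d - k)) := by
  obtain ⟨⟨p, hp⟩, hfk⟩ := hf
  have hcodim : finrank ℝ f.directionᗮ = finrank ℝ (EuclideanSpace ℝ (Fin (d - k))) := by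
    have := f.direction.finrank_add_finrank_orthogonal
    rw [finrank_euclideanSpace_fin, hfk] at this
    rw [finrank_euclideanSpace_fin]
    omega
  have hcube : (2 * (√d / 2)) ^ k = (d : ℝ) ^ ((k : ℝ) / 2) := by
    rw [mul_div_cancel₀ _ two_ne_zero, Real.sqrt_eq_rpow, ← Real.rpow_natCast,
      ← Real.rpow_mul (Nat.cast_nonneg d), one_div_mul_eq_div]
  calc volume {x | x ∈ unitCube d ∧ infDist x f ≤ r}
      ≤ volume {x | x ∈ closedBall (WithLp.toLp 2 fun _ ↦ 1 / 2) (√d / 2) ∧ infDist x f ≤ r} :=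
        measure_mono fun x hx ↦ ⟨unitCube_subset_closedBall d hx.1, hx.2⟩
    _ ≤ ENNReal.ofReal (2 * (√d / 2)) ^ k * volume (closedBall (0 : f.directionᗮ) r) :=
        hfk ▸ f.volume_closedBall_inter_infDist_le hp _ (by positivity) r
    _ = ENNReal.ofReal (d ^ ((k : ℝ) / 2)) * (ENNReal.ofReal (r ^ (d - k)) *
          volume (closedBall (0 : EuclideanSpace ℝ (Fin (d - k))) 1)) := by
        rw [InnerProductSpace.volume_closedBall_zero_eq_of_finrank_eq hcodim,
          Measure.addHaar_closedBall' _ _ hr.le, finrank_euclideanSpace_fin,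
          ← ENNReal.ofReal_pow (by positivity), hcube]
    _ = _ := by
        rw [ENNReal.ofReal_mul (by positivity), ENNReal.ofReal_mul (by positivity),
          ENNReal.ofReal_toReal measure_closedBall_lt_top.ne]
        ring

/-- The volume of the part of `[0,1]^d` within distance `r` of a `k`-flat `f` is at most
`d^(k/2) · ω_{d-k} · r^(d-k)`, where `ω_{d-k}` is the volume of the Euclidean unit ball
in `ℝ^{d-k}`. -/
theorem volume_tube_le (d k : ℕ) (hd : 1 ≤ d) (hk : k ≤ d - 1)
    (f : AffineSubspace ℝ (EuclideanSpace ℝ (Fin d))) (hf : IsKFlat d k f)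
    (r : ℝ) (hr : 0 < r) :
    volume {x | x ∈ unitCube d ∧
        Metric.infDist x (f : Set (EuclideanSpace ℝ (Fin d))) ≤ r} ≤
      ENNReal.ofReal ((d : ℝ) ^ ((k : ℝ) / 2) *
        (volume (Metric.closedBall (0 : EuclideanSpace ℝ (Fin (d - k))) 1)).toReal *
        r ^ (d - k)) :=
  volume_tube_le_general d k f hf r hr
end
end

section
/- Let d ≥ 1, ε ∈ (0,1), and let P ⊆ ℝ^d be a set of points such that every ellipsoid E ⊆ [0,1]^d with vol(E) ≥ ε/d^d contains a point of P. Then every compact convex set Ξ ⊆ ℝ^d with vol(Ξ ∩ [0,1]^d) ≥ ε contains a point of P. -/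
open MeasureTheory

noncomputable section

/-- An ellipsoid in `ℝ^d`: the image of the closed Euclidean unit ball under an invertible
affine transformation. -/
def IsEllipsoid (d : ℕ) (E : Set (EuclideanSpace ℝ (Fin d))) : Prop :=
  ∃ A : EuclideanSpace ℝ (Fin d) ≃ᵃ[ℝ] EuclideanSpace ℝ (Fin d),
    E = A '' Metric.closedBall 0 1

/-!
The set `K = Ξ ∩ [0,1]^d` is a convex body, so by compactness some affine image `E` of the unit
ball of maximal volume is contained in `K`. Normalize `E` to be the unit ball `B`. If some
`x ∈ K` had `‖x‖ = s > d`, then `conv (B ∪ {x}) ⊆ K` would contain the ellipsoid centred at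
`t • x / s` with semi-axis `1 + t` along `x` and `√(1 - 2t/(s-1))` orthogonally to it; for
small `t > 0` its volume `(1 + t) (1 - 2t/(s-1))^((d-1)/2)` exceeds that of `B`. Hence
`K ⊆ d • E` (John's theorem), so `vol E ≥ vol K / d^d ≥ ε / d^d`, and `E ⊆ [0,1]^d` contains a
point of `P`, which lies in `Ξ`.
-/

open Metric Module

lemma exists_stretch_sq_det_gt_one {n : ℕ} (hn : 1 ≤ n) {s : ℝ} (hs : n < s) :
    ∃ t : ℝ, 0 < t ∧ t ≤ (s - 1) / 4 ∧ 1 < (1 + t) ^ 2 * (1 - 2 * t / (s - 1)) ^ (n - 1) := by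
  have hn' : (1 : ℝ) ≤ n := by exact_mod_cast hn
  have hs1 : 0 < s - 1 := by linarith
  set q : ℝ := 2 * (n - 1) / (s - 1)
  have hq0 : 0 ≤ q := div_nonneg (by linarith) hs1.le
  have hq2 : q < 2 := by rw [div_lt_iff₀ hs1]; linarith
  set t : ℝ := min ((2 - q) / (2 * (q + 2))) ((s - 1) / 4)
  have ht0 : 0 < t := lt_min (div_pos (by linarith) (by linarith)) (by positivity)
  have ht4 : t ≤ (s - 1) / 4 := min_le_right _ _
  have htq : 2 * (q + 2) * t ≤ 2 - q := (le_div_iff₀' (by positivity)).1 (min_le_left _ _)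
  refine ⟨t, ht0, ht4, ?_⟩
  have hber : 1 - q * t ≤ (1 - 2 * t / (s - 1)) ^ (n - 1) := by
    have h2t : 2 * t / (s - 1) ≤ 2 := by rw [div_le_iff₀ hs1]; linarith
    calc 1 - q * t = 1 + ((n - 1 : ℕ) : ℝ) * -(2 * t / (s - 1)) := by
          rw [Nat.cast_sub hn]; simp only [q]; ring
      _ ≤ (1 + -(2 * t / (s - 1))) ^ (n - 1) := one_add_mul_le_pow (by linarith) _
      _ = (1 - 2 * t / (s - 1)) ^ (n - 1) := by ring
  calc (1 : ℝ) < (1 + t) ^ 2 * (1 - q * t) := by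
        nlinarith [mul_pos ht0 ht0, mul_nonneg (mul_nonneg hq0 ht0.le) ht0.le]
    _ ≤ (1 + t) ^ 2 * (1 - 2 * t / (s - 1)) ^ (n - 1) := by gcongr

/- A point at axial coordinate `y` and squared distance `r2` from the axis lies in the ellipse
centred at `t` with semi-axes `1 + t` and `√(1 - 2t/(s-1))` (hypothesis `hr`). Up to the polar
`s * y = 1` of the apex `s` it lies in the unit disc `B`, beyond it in some disc
`θ • s + (1 - θ) • B` of the cone over `B` with apex `s`. -/
lemma sq_add_le_one_of_mul_le_one {s t y r2 : ℝ} (hs : 1 < s) (ht : 0 < t) (hy : -1 ≤ y)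
    (hsy : s * y ≤ 1)
    (hr : (1 + t) ^ 2 * r2 ≤ (1 - 2 * t / (s - 1)) * ((1 + t) ^ 2 - (y - t) ^ 2)) :
    y ^ 2 + r2 ≤ 1 := by
  have hs1 : 0 < s - 1 := by linarith
  have hb2 : (1 - 2 * t / (s - 1)) * (s - 1) = s - 1 - 2 * t := by field_simp
  set b2 := 1 - 2 * t / (s - 1)
  have key : s ^ 2 * (s - 1) * ((1 + t) ^ 2 * (1 - y ^ 2) - (1 + t) ^ 2 * b2 + b2 * (y - t) ^ 2) =
      t ^ 2 * (s + 1) ^ 2 * s * (y + 1) +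
        ((2 * t + t ^ 2) * (s - 1) + 2 * t) * s * (y + 1) * (1 - s * y) := by
    linear_combination (s ^ 2 * ((y - t) ^ 2 - (1 + t) ^ 2)) * hb2
  have hy1 : 0 ≤ y + 1 := by linarith
  have hsy' : 0 ≤ 1 - s * y := by linarith
  have hF : 0 ≤ (1 + t) ^ 2 * (1 - y ^ 2) - (1 + t) ^ 2 * b2 + b2 * (y - t) ^ 2 := by
    refine (mul_nonneg_iff_of_pos_left (by positivity : 0 < s ^ 2 * (s - 1))).1 ?_
    rw [key]; positivity
  nlinarith [sq_nonneg (1 + t)]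

lemma exists_cone_coeff_of_one_lt_mul {s t y r2 : ℝ} (hs : 1 < s) (ht : 0 < t)
    (ht4 : t ≤ (s - 1) / 4) (hsy : 1 < s * y) (hr0 : 0 ≤ r2)
    (hr : (1 + t) ^ 2 * r2 ≤ (1 - 2 * t / (s - 1)) * ((1 + t) ^ 2 - (y - t) ^ 2)) :
    ∃ θ : ℝ, 0 ≤ θ ∧ θ < 1 ∧ (y - θ * s) ^ 2 + r2 ≤ (1 - θ) ^ 2 := by
  have hs1 : 0 < s - 1 := by linarith
  have hss : 0 < s ^ 2 - 1 := by nlinarith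
  have hb2 : (1 - 2 * t / (s - 1)) * (s - 1) = s - 1 - 2 * t := by field_simp
  have hyle : (y - t) ^ 2 ≤ (1 + t) ^ 2 := by nlinarith [mul_nonneg (sq_nonneg (1 + t)) hr0]
  have hB : 0 < s - 1 - 2 * t := by linarith
  have hA : 0 < (1 + t) ^ 2 + (s + 1) * (s - 1 - 2 * t) := by positivity
  have hG :
      (s + 1) * (s - 1 - 2 * t) * ((1 + t) ^ 2 - (y - t) ^ 2) ≤ (1 + t) ^ 2 * (s - y) ^ 2 := by
    have key : ((1 + t) ^ 2 + (s + 1) * (s - 1 - 2 * t)) *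
        ((1 + t) ^ 2 * (s - y) ^ 2 - (s + 1) * (s - 1 - 2 * t) * ((1 + t) ^ 2 - (y - t) ^ 2)) =
        (((1 + t) ^ 2 + (s + 1) * (s - 1 - 2 * t)) * y - s * (1 + t) ^ 2
          - t * (s + 1) * (s - 1 - 2 * t)) ^ 2 := by ring
    nlinarith [sq_nonneg (((1 + t) ^ 2 + (s + 1) * (s - 1 - 2 * t)) * y - s * (1 + t) ^ 2
          - t * (s + 1) * (s - 1 - 2 * t))]
  have hrle : r2 * (s ^ 2 - 1) ≤ (s - y) ^ 2 := by
    refine le_of_mul_le_mul_left ?_ (by positivity : 0 < (1 + t) ^ 2)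
    calc (1 + t) ^ 2 * (r2 * (s ^ 2 - 1)) = (1 + t) ^ 2 * r2 * (s ^ 2 - 1) := by ring
      _ ≤ (1 - 2 * t / (s - 1)) * ((1 + t) ^ 2 - (y - t) ^ 2) * (s ^ 2 - 1) := by gcongr
      _ = (s + 1) * ((1 - 2 * t / (s - 1)) * (s - 1)) * ((1 + t) ^ 2 - (y - t) ^ 2) := by ring
      _ ≤ (1 + t) ^ 2 * (s - y) ^ 2 := by rw [hb2]; exact hG
  -- The disc of the cone whose circle of tangency lies at axial coordinate `y`.
  refine ⟨(s * y - 1) / (s ^ 2 - 1), div_nonneg (by linarith) hss.le,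
    (div_lt_one hss).2 (by nlinarith), ?_⟩
  have e1 : y - (s * y - 1) / (s ^ 2 - 1) * s = (s - y) / (s ^ 2 - 1) := by field_simp; ring
  have e2 : 1 - (s * y - 1) / (s ^ 2 - 1) = s * (s - y) / (s ^ 2 - 1) := by field_simp; ring
  have e3 : (s * (s - y) / (s ^ 2 - 1)) ^ 2 - (((s - y) / (s ^ 2 - 1)) ^ 2 + r2) =
      ((s - y) ^ 2 - r2 * (s ^ 2 - 1)) / (s ^ 2 - 1) := by
    field_simp; ring
  rw [e1, e2, ← sub_nonneg, e3]
  exact div_nonneg (by linarith) hss.le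

lemma exists_cone_coeff {s t y r2 : ℝ} (hs : 1 < s) (ht : 0 < t) (ht4 : t ≤ (s - 1) / 4)
    (hr0 : 0 ≤ r2)
    (hr : (1 + t) ^ 2 * r2 ≤ (1 - 2 * t / (s - 1)) * ((1 + t) ^ 2 - (y - t) ^ 2)) :
    ∃ θ : ℝ, 0 ≤ θ ∧ θ < 1 ∧ (y - θ * s) ^ 2 + r2 ≤ (1 - θ) ^ 2 := by
  rcases le_or_gt (s * y) 1 with hsy | hsy
  · have hb2 : 0 < 1 - 2 * t / (s - 1) := by
      rw [sub_pos, div_lt_one (by linarith)]; linarith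
    have hyt : (y - t) ^ 2 ≤ (1 + t) ^ 2 := by
      have := (mul_nonneg_iff_of_pos_left hb2).1 ((by positivity : 0 ≤ (1 + t) ^ 2 * r2).trans hr)
      linarith
    have hy : -1 ≤ y := by linarith [(abs_le_of_sq_le_sq' hyt (by linarith)).1]
    exact ⟨0, le_rfl, one_pos, by simpa using sq_add_le_one_of_mul_le_one hs ht hy hsy hr⟩
  · exact exists_cone_coeff_of_one_lt_mul hs ht ht4 hsy hr0 hr

lemma Convex.mem_of_norm_sub_smul_le {F : Type*} [NormedAddCommGroup F] [NormedSpace ℝ F]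
    {K : Set F} (hK : Convex ℝ K) (hball : closedBall (0 : F) 1 ⊆ K) {x y : F} (hx : x ∈ K)
    {θ : ℝ} (hθ0 : 0 ≤ θ) (hθ1 : θ < 1) (hy : ‖y - θ • x‖ ≤ 1 - θ) : y ∈ K := by
  have hθ : 0 < 1 - θ := by linarith
  have hz : (1 - θ)⁻¹ • (y - θ • x) ∈ K := hball <| by
    rw [mem_closedBall_zero_iff, norm_smul, Real.norm_eq_abs, abs_of_pos (inv_pos.2 hθ)]
    exact inv_mul_le_one_of_le₀ hy hθ.le
  convert hK hz hx hθ.le hθ0 (by ring) using 1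
  rw [smul_inv_smul₀ hθ.ne', sub_add_cancel]

section Stretch

variable {E : Type*} [NormedAddCommGroup E] [InnerProductSpace ℝ E]

def stretchMap (a b : ℝ) (e : E) : E →L[ℝ] E :=
  b • ContinuousLinearMap.id ℝ E + (a - b) • (innerSL ℝ e).smulRight e

lemma stretchMap_apply (a b : ℝ) (e u : E) :
    stretchMap a b e u = b • u + ((a - b) * inner ℝ e u) • e := by
  simp [stretchMap, smul_smul]

lemma det_stretchMap [FiniteDimensional ℝ E] (a b : ℝ) {e : E} (he : ‖e‖ = 1) :
    (stretchMap a b e).det = a * b ^ (finrank ℝ E - 1) := by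
  obtain ⟨m, hm⟩ : ∃ m, finrank ℝ E = m + 1 :=
    Nat.exists_eq_succ_of_ne_zero
      (finrank_pos_iff_exists_ne_zero.2 ⟨e, by simp [← norm_ne_zero_iff, he]⟩).ne'
  have horth : Orthonormal ℝ (({0} : Set (Fin (m + 1))).domRestrict fun _ => e) :=
    orthonormal_subsingleton_iff.2 fun _ => he
  obtain ⟨v, hv⟩ := horth.exists_orthonormalBasis_extension_of_card_eq (by simpa using hm)
  have hv0 : v 0 = e := hv 0 rfl
  have hmat : LinearMap.toMatrix v.toBasis v.toBasis (stretchMap a b e : E →ₗ[ℝ] E) =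
      Matrix.diagonal (Matrix.vecCons a fun _ => b) := by
    ext i j
    rw [LinearMap.toMatrix_apply]
    simp only [OrthonormalBasis.coe_toBasis, OrthonormalBasis.coe_toBasis_repr_apply,
      OrthonormalBasis.repr_apply_apply, ContinuousLinearMap.coe_coe, stretchMap_apply,
      inner_add_right, real_inner_smul_right, ← hv0, orthonormal_iff_ite.1 v.orthonormal]
    cases i using Fin.cases <;> cases j using Fin.cases <;>
      simp [Matrix.diagonal, Fin.succ_ne_zero, (Fin.succ_ne_zero _).symm]
  rw [ContinuousLinearMap.det, ← LinearMap.det_toMatrix v.toBasis, hmat, Matrix.det_diagonal,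
    Fin.prod_univ_succ]
  simp [hm]

lemma norm_smul_add_sq_of_inner_eq_zero {e p : E} (he : ‖e‖ = 1) (hp : inner ℝ e p = 0)
    (α : ℝ) : ‖α • e + p‖ ^ 2 = α ^ 2 + ‖p‖ ^ 2 := by
  rw [sq, norm_add_sq_eq_norm_sq_add_norm_sq_real (by rw [real_inner_smul_left, hp, mul_zero]),
    norm_smul, he, Real.norm_eq_abs, mul_one, abs_mul_abs_self, sq, sq]

/- Pairs `(L, c)` with `L '' B + c ⊆ K`, i.e. the possibly degenerate ellipsoids inscribed in `K`;
parametrized this way they form a compact set when `K` is compact. -/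
def inscribedMaps (K : Set E) : Set ((E →L[ℝ] E) × E) :=
  {q | ∀ u ∈ closedBall (0 : E) 1, q.1 u + q.2 ∈ K}

lemma stretchMap_mem_inscribedMaps {K : Set E} (hK : Convex ℝ K)
    (hball : closedBall (0 : E) 1 ⊆ K) {e : E} (he : ‖e‖ = 1) {s t : ℝ} (hs : 1 < s) (ht : 0 < t)
    (ht4 : t ≤ (s - 1) / 4) (hx : s • e ∈ K) :
    (stretchMap (1 + t) √(1 - 2 * t / (s - 1)) e, t • e) ∈ inscribedMaps K := by
  intro u hu
  set b2 := 1 - 2 * t / (s - 1)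
  set b := √b2
  have hb2 : 0 < b2 := by rw [sub_pos, div_lt_one (by linarith)]; linarith
  set w := inner ℝ e u
  set p := u - w • e
  have hp : inner ℝ e p = 0 := by
    rw [inner_sub_right, real_inner_smul_right, real_inner_self_eq_norm_sq, he]; ring
  have hwp : w ^ 2 + ‖p‖ ^ 2 ≤ 1 := by
    rw [← norm_smul_add_sq_of_inner_eq_zero he hp, add_sub_cancel]
    exact pow_le_one₀ (norm_nonneg u) (mem_closedBall_zero_iff.1 hu)
  set y := t + (1 + t) * w
  have hy : stretchMap (1 + t) b e u + t • e = y • e + b • p := by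
    rw [stretchMap_apply]; simp only [p, y]; module
  have hr : (1 + t) ^ 2 * (b ^ 2 * ‖p‖ ^ 2) ≤ b2 * ((1 + t) ^ 2 - (y - t) ^ 2) := by
    rw [Real.sq_sqrt hb2.le]
    calc (1 + t) ^ 2 * (b2 * ‖p‖ ^ 2) = b2 * (1 + t) ^ 2 * ‖p‖ ^ 2 := by ring
      _ ≤ b2 * (1 + t) ^ 2 * (1 - w ^ 2) := by gcongr; linarith
      _ = b2 * ((1 + t) ^ 2 - (y - t) ^ 2) := by ring
  obtain ⟨θ, hθ0, hθ1, hθ⟩ := exists_cone_coeff hs ht ht4 (by positivity) hr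
  rw [hy]
  refine hK.mem_of_norm_sub_smul_le hball hx hθ0 hθ1 ?_
  have hbp : inner ℝ e (b • p) = 0 := by rw [real_inner_smul_right, hp, mul_zero]
  rw [← pow_le_pow_iff_left₀ (norm_nonneg _) (by linarith) two_ne_zero,
    show y • e + b • p - θ • s • e = (y - θ * s) • e + b • p by module,
    norm_smul_add_sq_of_inner_eq_zero he hbp, norm_smul, Real.norm_eq_abs,
    abs_of_nonneg (Real.sqrt_nonneg _), mul_pow]
  exact hθ

end Stretch

section John

variable {E : Type*} [NormedAddCommGroup E] [InnerProductSpace ℝ E] [FiniteDimensional ℝ E]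

theorem Convex.subset_closedBall_finrank_of_abs_det_le_one {K : Set E} (hK : Convex ℝ K)
    (hball : closedBall (0 : E) 1 ⊆ K) (hmax : ∀ q ∈ inscribedMaps K, |q.1.det| ≤ 1) :
    K ⊆ closedBall (0 : E) (finrank ℝ E) := by
  intro x hx
  by_contra hxout
  have hs : (finrank ℝ E : ℝ) < ‖x‖ := by simpa using hxout
  have hx0 : x ≠ 0 := norm_pos_iff.1 ((Nat.cast_nonneg _).trans_lt hs)
  have hn : 1 ≤ finrank ℝ E := finrank_pos_iff_exists_ne_zero.2 ⟨x, hx0⟩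
  have hs1 : 1 < ‖x‖ := lt_of_le_of_lt (by exact_mod_cast hn) hs
  obtain ⟨t, ht, ht4, hgrow⟩ := exists_stretch_sq_det_gt_one hn hs
  set e := ‖x‖⁻¹ • x
  have he : ‖e‖ = 1 := norm_smul_inv_norm hx0
  have hxe : ‖x‖ • e = x := smul_inv_smul₀ (norm_ne_zero_iff.2 hx0) x
  have hdet := hmax _ (stretchMap_mem_inscribedMaps hK hball he hs1 ht ht4 (by rwa [hxe]))
  rw [det_stretchMap _ _ he] at hdet
  have hb2 : 0 ≤ 1 - 2 * t / (‖x‖ - 1) := by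
    rw [sub_nonneg, div_le_one (by linarith)]; linarith
  have : 1 < (1 + t) * √(1 - 2 * t / (‖x‖ - 1)) ^ (finrank ℝ E - 1) := by
    refine lt_of_pow_lt_pow_left₀ 2 (by positivity) ?_
    rwa [one_pow, mul_pow, ← pow_mul, mul_comm _ 2, pow_mul, Real.sq_sqrt hb2]
  rw [abs_of_pos (by linarith)] at hdet
  linarith

lemma isCompact_inscribedMaps {K : Set E} (hK : IsCompact K) : IsCompact (inscribedMaps K) := by
  have hclosed : IsClosed (inscribedMaps K) := by
    have : inscribedMaps K =
        ⋂ u ∈ closedBall (0 : E) 1, (fun q : (E →L[ℝ] E) × E => q.1 u + q.2) ⁻¹' K := by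
      ext q; simp [inscribedMaps]
    rw [this]
    exact isClosed_biInter fun u _ => hK.isClosed.preimage (by fun_prop)
  obtain ⟨R, hR⟩ := hK.isBounded.subset_closedBall 0
  refine Metric.isCompact_of_isClosed_isBounded hclosed
    (isBounded_iff_forall_norm_le.2 ⟨R + R, ?_⟩)
  intro q hq
  have hnorm : ∀ u ∈ closedBall (0 : E) 1, ‖q.1 u + q.2‖ ≤ R := fun u hu =>
    mem_closedBall_zero_iff.1 (hR (hq u hu))
  have h2 : ‖q.2‖ ≤ R := by simpa using hnorm 0 (mem_closedBall_self zero_le_one)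
  have h1 : ‖q.1‖ ≤ R + R := by
    refine ContinuousLinearMap.opNorm_le_of_unit_norm (by linarith [norm_nonneg q.2])
      fun u hu => ?_
    calc ‖q.1 u‖ = ‖(q.1 u + q.2) - q.2‖ := by rw [add_sub_cancel_right]
      _ ≤ R + R := (norm_sub_le _ _).trans (add_le_add (hnorm u (by simp [hu])) h2)
  exact norm_prod_le_iff.2 ⟨h1, by linarith [norm_nonneg q.2]⟩

lemma exists_isMaxOn_abs_det_inscribedMaps {K : Set E} (hK : IsCompact K)
    (hint : (interior K).Nonempty) :
    ∃ q ∈ inscribedMaps K, IsMaxOn (fun q => |q.1.det|) (inscribedMaps K) q ∧ q.1.det ≠ 0 := by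
  obtain ⟨x₀, hx₀⟩ := hint
  obtain ⟨ρ, hρ, hball⟩ := Metric.isOpen_iff.1 isOpen_interior x₀ hx₀
  have hsmall : ((ρ / 2) • ContinuousLinearMap.id ℝ E, x₀) ∈ inscribedMaps K := by
    intro u hu
    refine interior_subset (hball ?_)
    rw [mem_ball, dist_eq_norm, smul_apply, ContinuousLinearMap.id_apply,
      add_sub_cancel_right, norm_smul, Real.norm_of_nonneg (by positivity)]
    nlinarith [mem_closedBall_zero_iff.1 hu]
  have hcont : Continuous fun q : (E →L[ℝ] E) × E => |q.1.det| :=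
    (ContinuousLinearMap.continuous_det.comp continuous_fst).abs
  obtain ⟨q, hq, hmax⟩ :=
    (isCompact_inscribedMaps hK).exists_isMaxOn ⟨_, hsmall⟩ hcont.continuousOn
  refine ⟨q, hq, hmax, fun h0 => ?_⟩
  have := isMaxOn_iff.1 hmax _ hsmall
  simp [ContinuousLinearMap.det, h0] at this
  exact absurd this (not_le.2 (by positivity))

theorem IsCompact.exists_john_ellipsoid {K : Set E} (hKc : IsCompact K) (hKconv : Convex ℝ K)
    (hint : (interior K).Nonempty) :
    ∃ A : E ≃ᵃ[ℝ] E, A '' closedBall 0 1 ⊆ K ∧ K ⊆ A '' closedBall 0 (finrank ℝ E) := by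
  obtain ⟨⟨L, c⟩, hq, hmax, hdet⟩ := exists_isMaxOn_abs_det_inscribedMaps hKc hint
  let A : E ≃ᵃ[ℝ] E :=
    (LinearMap.equivOfDetNeZero _ hdet).toAffineEquiv.trans (AffineEquiv.constVAdd ℝ E c)
  have hA : ∀ u, A u = L u + c := fun u => add_comm _ _
  have hsub : A '' closedBall 0 1 ⊆ K :=
    Set.image_subset_iff.2 fun u hu => by rw [Set.mem_preimage, hA]; exact hq u hu
  refine ⟨A, hsub, fun z hz => ⟨A.symm z, ?_, A.apply_symm_apply z⟩⟩
  -- In the coordinates given by `A` the maximal inscribed ellipsoid is the unit ball.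
  refine (hKconv.affine_preimage A.toAffineMap).subset_closedBall_finrank_of_abs_det_le_one
    (Set.image_subset_iff.1 hsub) (fun ⟨M, c'⟩ hM => ?_) (by simpa using hz)
  have hLM : (L.comp M, L c' + c) ∈ inscribedMaps K := fun u hu => by
    simpa [hA, add_assoc] using hM u hu
  have := isMaxOn_iff.1 hmax _ hLM
  simp only [ContinuousLinearMap.det, ContinuousLinearMap.toLinearMap_comp, LinearMap.det_comp,
    abs_mul] at this
  exact (mul_le_iff_le_one_right (abs_pos.2 hdet)).1 this

end John

section Volume

variable {E : Type*} [NormedAddCommGroup E] [NormedSpace ℝ E] [FiniteDimensional ℝ E]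
  [MeasurableSpace E] [BorelSpace E] (μ : Measure E) [μ.IsAddHaarMeasure]

lemma Convex.interior_nonempty_of_measure_ne_zero {K : Set E} (hK : Convex ℝ K) (h : μ K ≠ 0) :
    (interior K).Nonempty := by
  by_contra hint
  refine h (measure_mono_null (fun x hx => ?_) (hK.addHaar_frontier μ))
  rw [frontier, Set.not_nonempty_iff_eq_empty.1 hint, Set.sdiff_empty]
  exact subset_closure hx

lemma addHaar_image_affineEquiv (A : E ≃ᵃ[ℝ] E) (S : Set E) :
    μ (A '' S) = ENNReal.ofReal |LinearMap.det A.linear.toLinearMap| * μ S := by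
  have : A '' S = (A 0 + ·) '' (A.linear '' S) := by
    rw [Set.image_image]
    refine Set.image_congr fun x _ => ?_
    simpa [add_comm] using A.map_vadd 0 x
  rw [this, Set.image_add_left, measure_preimage_add]
  exact Measure.addHaar_image_linearMap μ A.linear.toLinearMap S

lemma addHaar_image_affineEquiv_closedBall (A : E ≃ᵃ[ℝ] E) {r : ℝ} (hr : 0 ≤ r) :
    μ (A '' closedBall 0 r) = ENNReal.ofReal (r ^ finrank ℝ E) * μ (A '' closedBall 0 1) := by
  rw [addHaar_image_affineEquiv, addHaar_image_affineEquiv, Measure.addHaar_closedBall' μ 0 hr]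
  ring

end Volume

lemma unitCube_eq_preimage_pi (d : ℕ) :
    unitCube d = EuclideanSpace.equiv (Fin d) ℝ ⁻¹' Set.univ.pi fun _ => Set.Icc 0 1 := by
  ext x
  exact ⟨fun h i _ => h i, fun h i => h i (Set.mem_univ i)⟩

lemma isCompact_unitCube (d : ℕ) : IsCompact (unitCube d) := by
  rw [unitCube_eq_preimage_pi]
  exact (EuclideanSpace.equiv (Fin d) ℝ).toHomeomorph.isCompact_preimage.2
    (isCompact_univ_pi fun _ => isCompact_Icc)

lemma convex_unitCube (d : ℕ) : Convex ℝ (unitCube d) := by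
  rw [unitCube_eq_preimage_pi]
  exact (convex_pi fun _ _ => convex_Icc 0 1).linear_preimage
    (EuclideanSpace.equiv (Fin d) ℝ).toLinearEquiv.toLinearMap

theorem ellipsoids_suffice_general (d : ℕ) (ε : ℝ) (hε : ε ∈ Set.Ioo (0 : ℝ) 1)
    (P : Set (EuclideanSpace ℝ (Fin d)))
    (hP : ∀ E : Set (EuclideanSpace ℝ (Fin d)), IsEllipsoid d E → E ⊆ unitCube d →
      ENNReal.ofReal (ε / (d : ℝ) ^ d) ≤ volume E → (E ∩ P).Nonempty) :
    ∀ Ξ : Set (EuclideanSpace ℝ (Fin d)), IsCompact Ξ → Convex ℝ Ξ →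
      ENNReal.ofReal ε ≤ volume (Ξ ∩ unitCube d) → (Ξ ∩ P).Nonempty := by
  intro Ξ hΞc hΞconv hΞvol
  have hKconv : Convex ℝ (Ξ ∩ unitCube d) := hΞconv.inter (convex_unitCube d)
  have hKvol : volume (Ξ ∩ unitCube d) ≠ 0 := ((ENNReal.ofReal_pos.2 hε.1).trans_le hΞvol).ne'
  obtain ⟨A, hAK, hKA⟩ := (hΞc.inter_right (isCompact_unitCube d).isClosed).exists_john_ellipsoid
    hKconv (hKconv.interior_nonempty_of_measure_ne_zero volume hKvol)
  rw [finrank_euclideanSpace_fin] at hKA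
  have hvol : ENNReal.ofReal (ε / (d : ℝ) ^ d) ≤ volume (A '' closedBall 0 1) := by
    rw [ENNReal.ofReal_div_of_pos (by exact_mod_cast Nat.pow_self_pos)]
    refine ENNReal.div_le_of_le_mul ?_
    calc ENNReal.ofReal ε ≤ volume (Ξ ∩ unitCube d) := hΞvol
      _ ≤ volume (A '' closedBall 0 d) := measure_mono hKA
      _ = _ := by
        rw [addHaar_image_affineEquiv_closedBall volume A d.cast_nonneg,
          finrank_euclideanSpace_fin, mul_comm]
  obtain ⟨p, hpE, hpP⟩ := hP _ ⟨A, rfl⟩ (hAK.trans Set.inter_subset_right) hvol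
  exact ⟨p, (hAK hpE).1, hpP⟩

/-- If every ellipsoid `E ⊆ [0,1]^d` of volume at least `ε/d^d` contains a point of `P`,
then every compact convex set `Ξ` with `vol (Ξ ∩ [0,1]^d) ≥ ε` contains a point of `P`. -/
theorem ellipsoids_suffice (d : ℕ) (hd : 1 ≤ d) (ε : ℝ) (hε : ε ∈ Set.Ioo (0 : ℝ) 1)
    (P : Set (EuclideanSpace ℝ (Fin d)))
    (hP : ∀ E : Set (EuclideanSpace ℝ (Fin d)), IsEllipsoid d E → E ⊆ unitCube d →
      ENNReal.ofReal (ε / (d : ℝ) ^ d) ≤ volume E → (E ∩ P).Nonempty) :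
    ∀ Ξ : Set (EuclideanSpace ℝ (Fin d)), IsCompact Ξ → Convex ℝ Ξ →
      ENNReal.ofReal ε ≤ volume (Ξ ∩ unitCube d) → (Ξ ∩ P).Nonempty :=
  ellipsoids_suffice_general d ε hε P hP
end
end

section
/- Every compact convex set K ⊆ ℝ^d with nonempty interior contains an ellipsoid E ⊆ K with vol(E) ≥ vol(K)/d^d. -/
/-!
Among the affine images `x ↦ f x + c` of the unit ball `B` contained in `K`, take one maximising
`|det f|`: the parameters form a compact set, and a small ball around an interior point shows that
the maximum is positive. After normalising the maximiser to `B`, every point of `K` lies within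
distance `n = dim E` of the origin. Otherwise some `p ∈ K` has `‖p‖ = h > n`, and with `u = p / h`
the ellipsoid with centre `σ • u`, semi-axis `1 + σ` along `u` and `√(1 - k)` orthogonally to `u`
(where `σ = k (h - 1) / 2`) lies in the convex hull of `B ∪ {p}`; its volume ratio
`(1 + σ) (1 - k) ^ ((n - 1) / 2)` exceeds `1` for small `k > 0`, contradicting maximality.
So `K` lies in the `n`-fold dilate of the maximal ellipsoid, whose volume is `n ^ n` times larger.
-/

open MeasureTheory

noncomputable section

open Metric Set Module
open scoped RealInnerProductSpace

/- For a unit vector `v`, `s = ⟪u, v⟫` and `t = ‖axialStretch u (1 + σ) √(1 - k) v‖`, the left side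
is the support function at `v` of the image of the unit ball under
`x ↦ axialStretch u (1 + σ) √(1 - k) x + σ • u`, the right side that of `closedBall 0 1 ∪ {h • u}`. -/
lemma add_le_max_of_sq_eq {h k σ s t : ℝ} (hh : 1 < h) (hk₀ : 0 ≤ k) (hk₁ : k ≤ 1)
    (hσ : k * (h - 1) = 2 * σ) (hs : |s| ≤ 1) (ht : 0 ≤ t)
    (ht2 : t ^ 2 = (1 + σ) ^ 2 * s ^ 2 + (1 - k) * (1 - s ^ 2)) :
    σ * s + t ≤ max 1 (h * s) := by
  obtain ⟨hs₁, hs₂⟩ := abs_le.1 hs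
  have hσh : σ < h := by nlinarith
  rcases le_total (h * s) 1 with hhs | hhs
  · have hpos : 0 ≤ 1 - σ * s := by nlinarith
    have hsq : t ^ 2 ≤ (1 - σ * s) ^ 2 := by
      have hdiff : (1 - σ * s) ^ 2 - t ^ 2 = k * (1 + s) * (1 - h * s) := by
        rw [ht2]; linear_combination s * (1 + s) * hσ
      nlinarith [mul_nonneg (mul_nonneg hk₀ (by linarith : 0 ≤ 1 + s))
        (by linarith : 0 ≤ 1 - h * s)]
    have ht_le := (pow_le_pow_iff_left₀ ht hpos two_ne_zero).1 hsq
    linarith [le_max_left 1 (h * s)]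
  · have hpos : 0 ≤ (h - σ) * s := by nlinarith
    have hsq : t ^ 2 ≤ ((h - σ) * s) ^ 2 := by
      have hdiff : ((h - σ) * s) ^ 2 - t ^ 2 = (1 - k) * (h * s - 1) * (h * s + 1) := by
        rw [ht2]; linear_combination s ^ 2 * (h + 1) * hσ
      nlinarith [mul_nonneg (mul_nonneg (by linarith : 0 ≤ 1 - k) (by linarith : 0 ≤ h * s - 1))
        (by linarith : 0 ≤ h * s + 1)]
    have ht_le := (pow_le_pow_iff_left₀ ht hpos two_ne_zero).1 hsq
    linarith [le_max_right 1 (h * s)]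

lemma exists_one_lt_sq_mul_pow {m : ℕ} {h : ℝ} (hm : (m : ℝ) + 1 < h) :
    ∃ k : ℝ, 0 < k ∧ k ≤ 1 ∧ 1 < (1 + k * (h - 1) / 2) ^ 2 * (1 - k) ^ m := by
  -- Bernoulli reduces the claim to `1 < (1 + k (h - 1)) (1 - m k)`,
  -- which holds once `k (A + 1) ≤ h - 1 - m`.
  set A : ℝ := m * (h - 1)
  have hA : 0 ≤ A := mul_nonneg m.cast_nonneg (by linarith)
  set k := min 1 ((h - 1 - m) / (A + 1))
  have hk₀ : 0 < k := lt_min one_pos (div_pos (by linarith) (by linarith))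
  have hk₁ : k ≤ 1 := min_le_left _ _
  have hkA : k * (A + 1) ≤ h - 1 - m := (le_div_iff₀ (by linarith)).1 (min_le_right _ _)
  have bernoulli : 1 - m * k ≤ (1 - k) ^ m := by
    simpa [sub_eq_add_neg] using one_add_mul_le_pow (by linarith : (-2 : ℝ) ≤ -k) m
  have hmk : 0 ≤ 1 - m * k := by nlinarith
  refine ⟨k, hk₀, hk₁, ?_⟩
  calc 1 < (1 + k * (h - 1)) * (1 - m * k) := by nlinarith
    _ ≤ (1 + k * (h - 1) / 2) ^ 2 * (1 - k) ^ m := by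
      gcongr
      nlinarith [sq_nonneg (k * (h - 1) / 2)]

section NormedSpace

variable {F : Type*} [NormedAddCommGroup F] [NormedSpace ℝ F]

def inscribedBallMaps (K : Set F) : Set ((F →L[ℝ] F) × F) :=
  {p | ∀ x ∈ closedBall 0 1, p.1 x + p.2 ∈ K}

lemma isClosed_inscribedBallMaps {K : Set F} (hK : IsClosed K) :
    IsClosed (inscribedBallMaps K) := by
  simp only [inscribedBallMaps, ofPred_forall]
  exact isClosed_biInter fun x _ => hK.preimage (by fun_prop)

lemma isBounded_inscribedBallMaps {K : Set F} (hK : Bornology.IsBounded K) :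
    Bornology.IsBounded (inscribedBallMaps K) := by
  obtain ⟨R, hR⟩ := hK.subset_closedBall 0
  refine (isBounded_iff_subset_closedBall 0).2 ⟨2 * R, fun p hp => ?_⟩
  have hnorm : ∀ x ∈ closedBall (0 : F) 1, ‖p.1 x + p.2‖ ≤ R := fun x hx =>
    mem_closedBall_zero_iff.1 (hR (hp x hx))
  have hc : ‖p.2‖ ≤ R := by simpa using hnorm 0 (mem_closedBall_self zero_le_one)
  have hf : ‖p.1‖ ≤ 2 * R := by
    refine ContinuousLinearMap.opNorm_le_of_unit_norm (by linarith [norm_nonneg p.2])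
      fun x hx => ?_
    calc ‖p.1 x‖ = ‖(p.1 x + p.2) - p.2‖ := by rw [add_sub_cancel_right]
      _ ≤ ‖p.1 x + p.2‖ + ‖p.2‖ := norm_sub_le _ _
      _ ≤ 2 * R := by linarith [hnorm x (mem_closedBall_zero_iff.2 hx.le)]
  rw [mem_closedBall_zero_iff, Prod.norm_def]
  exact max_le hf (by linarith [norm_nonneg p.2])

lemma image_closedBall_zero_eq_homothety_image (A : F ≃ᵃ[ℝ] F) {r : ℝ} (hr : 0 ≤ r) :
    A '' closedBall 0 r = AffineMap.homothety (A 0) r '' (A '' closedBall 0 1) := by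
  rw [← smul_unitClosedBall_of_nonneg hr, image_image, ← image_smul, image_image]
  refine image_congr fun x _ => ?_
  simp [AffineMap.homothety_eq_lineMap, ← A.apply_lineMap, AffineMap.lineMap_apply]

variable [FiniteDimensional ℝ F]

lemma exists_isMaxOn_abs_det_inscribedBallMaps {K : Set F} (hK : IsCompact K)
    (hint : (interior K).Nonempty) :
    ∃ q ∈ inscribedBallMaps K,
      IsMaxOn (fun p => |p.1.det|) (inscribedBallMaps K) q ∧ q.1.det ≠ 0 := by
  obtain ⟨x₀, hx₀⟩ := hint
  obtain ⟨ε, hε, hball⟩ := nhds_basis_closedBall.mem_iff.1 (mem_interior_iff_mem_nhds.1 hx₀)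
  have hp₀ : (ε • ContinuousLinearMap.id ℝ F, x₀) ∈ inscribedBallMaps K := fun x hx =>
    hball <| by simpa [dist_eq_norm, norm_smul, abs_of_pos hε] using
      mul_le_of_le_one_right hε.le (mem_closedBall_zero_iff.1 hx)
  have hcompact : IsCompact (inscribedBallMaps K) :=
    isCompact_of_isClosed_isBounded (isClosed_inscribedBallMaps hK.isClosed)
      (isBounded_inscribedBallMaps hK.isBounded)
  obtain ⟨q, hq, hmax⟩ := hcompact.exists_isMaxOn ⟨_, hp₀⟩
    (ContinuousLinearMap.continuous_det.comp continuous_fst).abs.continuousOn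
  refine ⟨q, hq, hmax, fun hdet => ?_⟩
  have h₀ : |(ε • ContinuousLinearMap.id ℝ F).det| ≤ |q.1.det| := hmax hp₀
  simp only [hdet, abs_zero, ContinuousLinearMap.det, ContinuousLinearMap.toLinearMap_smul,
    ContinuousLinearMap.coe_id, LinearMap.det_smul, LinearMap.det_id, mul_one] at h₀
  exact (pow_pos hε _).ne' (abs_nonpos_iff.1 h₀)

lemma addHaar_image_closedBall_zero [MeasurableSpace F] [BorelSpace F] (μ : Measure F)
    [μ.IsAddHaarMeasure] (A : F ≃ᵃ[ℝ] F) {r : ℝ} (hr : 0 ≤ r) :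
    μ (A '' closedBall 0 r) = ENNReal.ofReal (r ^ finrank ℝ F) * μ (A '' closedBall 0 1) := by
  rw [image_closedBall_zero_eq_homothety_image A hr, Measure.addHaar_image_homothety,
    abs_of_nonneg (by positivity)]

end NormedSpace

section InnerProductSpace

variable {E : Type*} [NormedAddCommGroup E] [InnerProductSpace ℝ E]

lemma mem_of_forall_exists_inner_le [CompleteSpace E] {C : Set E} (hC : IsClosed C)
    (hconv : Convex ℝ C) (hne : C.Nonempty) {y : E}
    (hy : ∀ v : E, ‖v‖ = 1 → ∃ z ∈ C, ⟪v, y⟫ ≤ ⟪v, z⟫) : y ∈ C := by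
  by_contra hyC
  obtain ⟨f, r, hfC, hfy⟩ := geometric_hahn_banach_closed_point hconv hC hyC
  set w := (InnerProductSpace.toDual ℝ E).symm f
  have hw : ∀ x, ⟪w, x⟫ = f x := fun x => InnerProductSpace.toDual_symm_apply
  have hsep : ∀ z ∈ C, f z < f y := fun z hz => (hfC z hz).trans hfy
  obtain ⟨z₀, hz₀⟩ := hne
  have hw₀ : w ≠ 0 := by
    rintro hw0
    simpa [← hw, hw0] using hsep z₀ hz₀
  obtain ⟨z, hzC, hz⟩ := hy (‖w‖⁻¹ • w) (norm_smul_inv_norm hw₀)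
  rw [real_inner_smul_left, real_inner_smul_left, hw, hw] at hz
  exact (hsep z hzC).not_ge (le_of_mul_le_mul_left hz (inv_pos.2 (norm_pos_iff.2 hw₀)))

def axialStretch (u : E) (a b : ℝ) : E →L[ℝ] E :=
  b • ContinuousLinearMap.id ℝ E + (a - b) • (innerSL ℝ u).smulRight u

lemma axialStretch_apply (u : E) (a b : ℝ) (x : E) :
    axialStretch u a b x = b • x + ((a - b) * ⟪u, x⟫) • u := by
  simp [axialStretch, mul_smul]

lemma inner_axialStretch_left (u : E) (a b : ℝ) (x y : E) :
    ⟪axialStretch u a b x, y⟫ = ⟪x, axialStretch u a b y⟫ := by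
  simp only [axialStretch_apply, inner_add_left, inner_add_right, real_inner_smul_left,
    real_inner_smul_right, real_inner_comm x u, real_inner_comm y u]
  ring

lemma norm_axialStretch_sq {u : E} (hu : ‖u‖ = 1) (a b : ℝ) (x : E) :
    ‖axialStretch u a b x‖ ^ 2 = b ^ 2 * ‖x‖ ^ 2 + (a ^ 2 - b ^ 2) * ⟪u, x⟫ ^ 2 := by
  rw [← real_inner_self_eq_norm_sq, axialStretch_apply]
  simp only [inner_add_left, inner_add_right, real_inner_smul_left, real_inner_smul_right,
    real_inner_comm x u]
  rw [real_inner_self_eq_norm_sq, real_inner_self_eq_norm_sq, hu]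
  ring

lemma axialStretch_add_smul_mem [CompleteSpace E] {C : Set E} (hC : IsClosed C)
    (hconv : Convex ℝ C) (hball : closedBall 0 1 ⊆ C) {u : E} (hu : ‖u‖ = 1) {h : ℝ}
    (hh : 1 < h) (hhu : h • u ∈ C) {k : ℝ} (hk₀ : 0 ≤ k) (hk₁ : k ≤ 1) {x : E} (hx : ‖x‖ ≤ 1) :
    axialStretch u (1 + k * (h - 1) / 2) √(1 - k) x + (k * (h - 1) / 2) • u ∈ C := by
  set σ := k * (h - 1) / 2
  set T := axialStretch u (1 + σ) √(1 - k)
  refine mem_of_forall_exists_inner_le hC hconv ⟨0, hball (mem_closedBall_self zero_le_one)⟩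
    fun v hv => ?_
  set s := ⟪u, v⟫
  have hs : |s| ≤ 1 := by simpa [hu, hv] using abs_real_inner_le_norm u v
  have hTv : ‖T v‖ ^ 2 = (1 + σ) ^ 2 * s ^ 2 + (1 - k) * (1 - s ^ 2) := by
    rw [norm_axialStretch_sq hu, Real.sq_sqrt (by linarith), hv]; ring
  have hsupport : ⟪v, T x + σ • u⟫ ≤ σ * s + ‖T v‖ := by
    rw [inner_add_right, real_inner_smul_right, ← inner_axialStretch_left, real_inner_comm u v]
    nlinarith [real_inner_le_norm (T v) x, norm_nonneg (T v)]
  have hmax := add_le_max_of_sq_eq hh hk₀ hk₁ (by ring) hs (norm_nonneg _) hTv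
  rcases le_total (h * s) 1 with hhs | hhs
  · refine ⟨v, hball (by simp [hv]), hsupport.trans (hmax.trans ?_)⟩
    rw [max_eq_left hhs, real_inner_self_eq_norm_sq, hv, one_pow]
  · refine ⟨h • u, hhu, hsupport.trans (hmax.trans ?_)⟩
    rw [max_eq_right hhs, real_inner_smul_right, real_inner_comm]

variable [FiniteDimensional ℝ E]

lemma det_axialStretch {u : E} (hu : ‖u‖ = 1) (a b : ℝ) :
    (axialStretch u a b).det = a * b ^ (finrank ℝ E - 1) := by
  have : Nontrivial E := ⟨u, 0, by rintro rfl; simp at hu⟩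
  obtain ⟨m, hm⟩ := Nat.exists_eq_add_one_of_ne_zero (finrank_pos (R := ℝ) (M := E)).ne'
  have horth : Orthonormal ℝ (({0} : Set (Fin (m + 1))).domRestrict fun _ => u) :=
    ⟨fun _ => hu, fun i j hij => absurd (Subsingleton.elim i j) hij⟩
  obtain ⟨B, hB⟩ := horth.exists_orthonormalBasis_extension_of_card_eq (by simpa using hm)
  have hB₀ : B 0 = u := hB 0 rfl
  set c : Fin (m + 1) → ℝ := fun j => if j = 0 then a else b
  have heigen : ∀ j, axialStretch u a b (B j) = c j • B j := by
    intro j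
    rw [axialStretch_apply, ← hB₀, B.inner_eq_ite]
    by_cases hj : j = 0
    · subst hj; simp only [c, if_true, mul_one]; module
    · simp [c, hj, Ne.symm hj]
  have hdiag : (axialStretch u a b : E →ₗ[ℝ] E) =
      Matrix.toLin B.toBasis B.toBasis (Matrix.diagonal c) :=
    B.toBasis.ext fun j => by
      rw [Matrix.toLin_self]; simp [heigen, Matrix.diagonal_apply]
  rw [ContinuousLinearMap.det, hdiag, LinearMap.det_toLin, Matrix.det_diagonal,
    Fin.prod_univ_succ, hm]
  simp [c, Fin.succ_ne_zero]

lemma subset_closedBall_finrank_of_abs_det_le_one {C : Set E}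
    (hC : IsClosed C) (hconv : Convex ℝ C) (hball : closedBall 0 1 ⊆ C)
    (hmax : ∀ (g : E →L[ℝ] E) (c : E), (∀ x ∈ closedBall 0 1, g x + c ∈ C) →
      |g.det| ≤ 1) :
    C ⊆ closedBall 0 (finrank ℝ E) := by
  intro p hpC
  rw [mem_closedBall_zero_iff]
  by_contra! hp
  set h := ‖p‖
  have hp₀ : p ≠ 0 := norm_pos_iff.1 ((Nat.cast_nonneg _).trans_lt hp)
  have : Nontrivial E := ⟨p, 0, hp₀⟩
  set u := h⁻¹ • p
  have hu : ‖u‖ = 1 := norm_smul_inv_norm hp₀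
  have hhu : h • u = p := smul_inv_smul₀ (norm_ne_zero_iff.2 hp₀) p
  have hn : ((finrank ℝ E - 1 : ℕ) : ℝ) + 1 < h := by
    rwa [Nat.cast_sub finrank_pos, Nat.cast_one, sub_add_cancel]
  have hh : 1 < h := lt_of_le_of_lt (Nat.one_le_cast.2 finrank_pos) hp
  obtain ⟨k, hk₀, hk₁, hgain⟩ := exists_one_lt_sq_mul_pow hn
  set a := 1 + k * (h - 1) / 2
  have hdet := hmax (axialStretch u a √(1 - k)) ((k * (h - 1) / 2) • u) fun x hx =>
    axialStretch_add_smul_mem hC hconv hball hu hh (hhu ▸ hpC) hk₀.le hk₁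
      (mem_closedBall_zero_iff.1 hx)
  rw [det_axialStretch hu, ← sq_le_one_iff_abs_le_one, mul_pow, ← pow_mul, mul_comm _ 2, pow_mul,
    Real.sq_sqrt (by linarith)] at hdet
  exact hdet.not_gt hgain

theorem exists_affineEquiv_image_closedBall_subset_subset {K : Set E} (hK : IsCompact K)
    (hconv : Convex ℝ K) (hint : (interior K).Nonempty) :
    ∃ A : E ≃ᵃ[ℝ] E, A '' closedBall 0 1 ⊆ K ∧ K ⊆ A '' closedBall 0 (finrank ℝ E) := by
  obtain ⟨⟨f, c⟩, hfc, hmax, hdet⟩ := exists_isMaxOn_abs_det_inscribedBallMaps hK hint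
  let A := (LinearMap.equivOfIsUnitDet (isUnit_iff_ne_zero.2 hdet)).toAffineEquiv.trans
    (AffineEquiv.constVAdd ℝ E c)
  have hA : ∀ x, A x = f x + c := fun x => by
    simp [A, LinearMap.equivOfIsUnitDet_apply, add_comm]
  have hball : closedBall 0 1 ⊆ A ⁻¹' K := fun x hx => by simpa [hA] using hfc x hx
  refine ⟨A, image_subset_iff.2 hball, fun p hp => ⟨A.symm p, ?_, A.apply_symm_apply p⟩⟩
  refine subset_closedBall_finrank_of_abs_det_le_one
    (hK.isClosed.preimage A.toAffineMap.continuous_of_finiteDimensional)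
    (hconv.affine_preimage A.toAffineMap) hball (fun g c' hgc' => ?_) (by simpa using hp)
  have hcomp : (f.comp g, f c' + c) ∈ inscribedBallMaps K := fun x hx => by
    simpa [hA, add_assoc] using hgc' x hx
  have h : |(f.comp g).det| ≤ |f.det| := hmax hcomp
  rwa [ContinuousLinearMap.det, ContinuousLinearMap.toLinearMap_comp, LinearMap.det_comp, abs_mul,
    mul_le_iff_le_one_right (abs_pos.2 hdet)] at h

end InnerProductSpace

/-- John's theorem (volume form): every compact convex set `K ⊆ ℝ^d` with nonempty interior
contains an ellipsoid of volume at least `vol(K)/d^d`. -/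
theorem john_volume (d : ℕ) (K : Set (EuclideanSpace ℝ (Fin d)))
    (hK : IsCompact K) (hconv : Convex ℝ K) (hint : (interior K).Nonempty) :
    ∃ E : Set (EuclideanSpace ℝ (Fin d)), IsEllipsoid d E ∧ E ⊆ K ∧
      volume K / (d : ENNReal) ^ d ≤ volume E := by
  obtain ⟨A, hin, hout⟩ := exists_affineEquiv_image_closedBall_subset_subset hK hconv hint
  rw [finrank_euclideanSpace_fin] at hout
  refine ⟨A '' closedBall 0 1, ⟨A, rfl⟩, hin, ENNReal.div_le_of_le_mul ?_⟩
  calc volume K ≤ volume (A '' closedBall 0 d) := measure_mono hout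
    _ = volume (A '' closedBall 0 1) * (d : ENNReal) ^ d := by
      rw [addHaar_image_closedBall_zero volume A d.cast_nonneg, finrank_euclideanSpace_fin,
        mul_comm, ENNReal.ofReal_pow d.cast_nonneg, ENNReal.ofReal_natCast]
end
end

section
/- For every dimension d ≥ 2 there exists a constant C_d > 0 such that for every ε ∈ (0,1) there exists a finite set P ⊆ [0,1]^d with |P| ≤ C_d·ε^{-1}·(log(1/ε))^{d-1} + C_d such that every compact convex set Ξ ⊆ ℝ^d with vol(Ξ ∩ [0,1]^d) ≥ ε contains a point of P; i.e., P is a (0,ε)-net for [0,1]^d. -/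
/-!
Induction on the dimension. Let `K ⊆ [0,1]^(m+1)` be compact and convex with `vol K ≥ ε`, and
let `M ≤ 1` be the supremum of the volumes of its slices `{x₀ = t}`; choose `s` with
`2^-(s+1) < M ≤ 2^-s`. As `vol K ≤ M · (b - a)`, where `[a, b]` is the projection of `K` to the
`x₀`-axis, `b - a ≥ ε 2^s`. If the slice at `t₀` has volume `> 2^-(s+1)`, the homothety of ratio
`1/2` centred at a point of `K` over `2t - t₀` maps it into the slice at `t`; so every slice over
`[(t₀+a)/2, (t₀+b)/2]`, an interval of length `≥ ε 2^s / 2`, has volume `≥ 2^-(s+m+1)`. Hence `K`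
meets the product of a grid of spacing `ε 2^s / 2` on the `x₀`-axis with a net for `[0,1]^m` at
scale `2^-(s+m+1)`. The factor `2^s` in the size of the grid cancels the one in the size of that
net, so each of the `O(log 1/ε)` levels `s` costs `O(ε⁻¹ log^(m-1) (1/ε))` points.
-/

open MeasureTheory

noncomputable section

namespace WeakEpsNet

open Set

def grid (δ : ℝ) : Finset ℝ :=
  (Finset.range (⌊δ⁻¹⌋₊ + 1)).image fun j : ℕ ↦ j * δ

section Grid

variable {δ : ℝ}

lemma mem_grid_iff (hδ : 0 < δ) {t : ℝ} :
    t ∈ grid δ ↔ ∃ j : ℕ, j * δ ≤ 1 ∧ j * δ = t := by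
  simp only [grid, Finset.mem_image, Finset.mem_range, Nat.lt_succ_iff,
    Nat.le_floor_iff (inv_nonneg.2 hδ.le), ← le_div_iff₀ hδ, one_div]

lemma grid_subset_Icc (hδ : 0 < δ) : (grid δ : Set ℝ) ⊆ Icc 0 1 := by
  intro t ht
  obtain ⟨j, hj, rfl⟩ := (mem_grid_iff hδ).1 ht
  exact ⟨by positivity, hj⟩

lemma card_grid_le (hδ : 0 < δ) : ((grid δ).card : ℝ) ≤ δ⁻¹ + 1 := by
  calc ((grid δ).card : ℝ) ≤ (⌊δ⁻¹⌋₊ + 1 : ℕ) := by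
        exact_mod_cast Finset.card_image_le.trans (Finset.card_range _).le
    _ ≤ δ⁻¹ + 1 := by push_cast; gcongr; exact Nat.floor_le (by positivity)

lemma exists_mem_grid_mem_Icc (hδ : 0 < δ) {u v : ℝ} (hu : 0 ≤ u) (hv : v ≤ 1)
    (huv : δ ≤ v - u) : ∃ t ∈ grid δ, t ∈ Icc u v := by
  have hu_le : u ≤ ⌈u / δ⌉₊ * δ := (div_le_iff₀ hδ).1 (Nat.le_ceil _)
  have hlt_v : ⌈u / δ⌉₊ * δ < u + δ := by
    have := Nat.ceil_lt_add_one (div_nonneg hu hδ.le)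
    rwa [← lt_div_iff₀ hδ, add_div, div_self hδ.ne']
  exact ⟨_, (mem_grid_iff hδ).2 ⟨_, by linarith, rfl⟩, hu_le, by linarith⟩

end Grid

def slice {m : ℕ} (K : Set (Fin (m + 1) → ℝ)) (t : ℝ) : Set (Fin m → ℝ) :=
  {y | Fin.cons t y ∈ K}

section Slice

variable {m : ℕ} {K : Set (Fin (m + 1) → ℝ)}

lemma cons_mem_Icc_zero_one {t : ℝ} {y : Fin m → ℝ} :
    (Fin.cons t y : Fin (m + 1) → ℝ) ∈ Icc 0 1 ↔ t ∈ Icc 0 1 ∧ y ∈ Icc 0 1 := by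
  simp only [mem_Icc, Pi.le_def, Fin.forall_fin_succ, Fin.cons_zero, Fin.cons_succ,
    Pi.zero_apply, Pi.one_apply]
  tauto

lemma smul_cons_add_smul_cons (a b t s : ℝ) (y z : Fin m → ℝ) :
    a • (Fin.cons t y : Fin (m + 1) → ℝ) + b • (Fin.cons s z : Fin (m + 1) → ℝ) =
      Fin.cons (a * t + b * s) (a • y + b • z) := by
  ext i
  induction i using Fin.cases <;> simp

lemma slice_subset_Icc (hK : K ⊆ Icc 0 1) (t : ℝ) : slice K t ⊆ Icc 0 1 :=
  fun _ hy ↦ (cons_mem_Icc_zero_one.1 (hK hy)).2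

lemma isCompact_slice (hK : IsCompact K) (t : ℝ) : IsCompact (slice K t) :=
  (hK.image (continuous_pi fun i ↦ continuous_apply i.succ)).of_isClosed_subset
    (hK.isClosed.preimage (continuous_const.finCons continuous_id))
    fun _ hy ↦ ⟨_, hy, Fin.tail_cons _ _⟩

lemma convex_slice (hK : Convex ℝ K) (t : ℝ) : Convex ℝ (slice K t) := by
  intro y hy z hz a b ha hb hab
  have := hK hy hz ha hb hab
  rwa [smul_cons_add_smul_cons, ← add_mul, hab, one_mul] at this

lemma volume_eq_lintegral_volume_slice (hK : MeasurableSet K) :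
    volume K = ∫⁻ t, volume (slice K t) := by
  rw [← ((volume_preserving_piFinSuccAbove (fun _ : Fin (m + 1) ↦ ℝ) 0).symm).measure_preimage
    hK.nullMeasurableSet, Measure.volume_eq_prod,
    Measure.prod_apply (hK.preimage (MeasurableEquiv.measurable _))]
  congr! with t
  simp only [MeasurableEquiv.piFinSuccAbove_symm_apply, Fin.insertNthEquiv_zero]
  rfl

lemma ofReal_inv_two_pow_mul_volume_slice_le (hK : Convex ℝ K) {x : Fin (m + 1) → ℝ}
    (hx : x ∈ K) (t : ℝ) :
    ENNReal.ofReal (2 ^ m)⁻¹ * volume (slice K t) ≤ volume (slice K ((t + x 0) / 2)) := by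
  have hmaps : AffineMap.homothety (Fin.tail x) (2⁻¹ : ℝ) '' slice K t ⊆
      slice K ((t + x 0) / 2) := by
    rintro - ⟨y, hy, rfl⟩
    have hmid := hK hy hx (by norm_num : (0 : ℝ) ≤ 2⁻¹) (by norm_num : (0 : ℝ) ≤ 2⁻¹)
      (by norm_num)
    rw [← Fin.cons_self_tail x, smul_cons_add_smul_cons] at hmid
    have hhom : AffineMap.homothety (Fin.tail x) (2⁻¹ : ℝ) y =
        (2⁻¹ : ℝ) • y + (2⁻¹ : ℝ) • Fin.tail x := by
      simp only [AffineMap.homothety_apply, vsub_eq_sub, vadd_eq_add]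
      module
    change Fin.cons _ _ ∈ K
    rw [hhom]
    convert hmid using 2
    ring
  calc ENNReal.ofReal (2 ^ m)⁻¹ * volume (slice K t)
      = volume (AffineMap.homothety (Fin.tail x) (2⁻¹ : ℝ) '' slice K t) := by
        rw [Measure.addHaar_image_homothety, Module.finrank_fin_fun, abs_of_pos (by norm_num),
          inv_pow]
    _ ≤ volume (slice K ((t + x 0) / 2)) := measure_mono hmaps

lemma volume_le_iSup_volume_slice_mul (hK : MeasurableSet K) {a b : ℝ}
    (hKab : ∀ x ∈ K, x 0 ∈ Icc a b) :
    volume K ≤ (⨆ t, volume (slice K t)) * ENNReal.ofReal (b - a) := by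
  set M := ⨆ t, volume (slice K t)
  have hslice : ∀ t, volume (slice K t) ≤ (Icc a b).indicator (fun _ ↦ M) t := by
    intro t
    by_cases ht : t ∈ Icc a b
    · rw [indicator_of_mem ht]
      exact le_iSup (fun t ↦ volume (slice K t)) t
    · have : slice K t = ∅ :=
        eq_empty_of_forall_notMem fun y hy ↦ ht (by simpa using hKab _ hy)
      simp [this]
  calc volume K = ∫⁻ t, volume (slice K t) := volume_eq_lintegral_volume_slice hK
    _ ≤ ∫⁻ t, (Icc a b).indicator (fun _ ↦ M) t := lintegral_mono hslice
    _ = M * ENNReal.ofReal (b - a) := by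
        rw [lintegral_indicator_const measurableSet_Icc, Real.volume_Icc]

lemma exists_two_pow_le_and_volume_slice_gt (hK : MeasurableSet K) {a b : ℝ}
    (hab : b - a ≤ 1) (hKab : ∀ x ∈ K, x 0 ∈ Icc a b)
    (hK1 : ∀ t, volume (slice K t) ≤ 1) {ε : ℝ} (hε : 0 < ε)
    (hvol : ENNReal.ofReal ε ≤ volume K) :
    ∃ s : ℕ, (2 : ℝ) ^ s ≤ ε⁻¹ ∧ ε * 2 ^ s ≤ b - a ∧
      ∃ t, ENNReal.ofReal (2 ^ (s + 1))⁻¹ < volume (slice K t) := by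
  set M := ⨆ t, volume (slice K t)
  have hM_le : M ≤ 1 := iSup_le hK1
  have hM : ENNReal.ofReal M.toReal = M :=
    ENNReal.ofReal_toReal (ne_top_of_le_ne_top ENNReal.one_ne_top hM_le)
  have hM1 : M.toReal ≤ 1 :=
    ENNReal.toReal_le_of_le_ofReal zero_le_one (ENNReal.ofReal_one ▸ hM_le)
  have hεM : ε ≤ M.toReal * (b - a) := by
    have : ENNReal.ofReal ε ≤ M * ENNReal.ofReal (b - a) :=
      hvol.trans (volume_le_iSup_volume_slice_mul hK hKab)
    rw [← hM, ← ENNReal.ofReal_mul ENNReal.toReal_nonneg,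
      ENNReal.ofReal_le_ofReal_iff'] at this
    exact this.resolve_right hε.not_ge
  have hM0 : 0 < M.toReal := by
    refine ENNReal.toReal_nonneg.lt_of_ne fun h ↦ ?_
    rw [← h, zero_mul] at hεM
    linarith
  have hba : 0 < b - a := pos_of_mul_pos_right (hε.trans_le hεM) ENNReal.toReal_nonneg
  obtain ⟨s, hs_lt, hs_le⟩ :=
    exists_nat_pow_near_of_lt_one hM0 hM1 (by norm_num : (0 : ℝ) < 2⁻¹) (by norm_num)
  rw [inv_pow] at hs_lt hs_le
  refine ⟨s, ?_, ?_, ?_⟩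
  · rw [le_inv_comm₀ (by positivity) hε]
    nlinarith
  · have := hεM.trans (mul_le_mul_of_nonneg_right hs_le hba.le)
    rwa [inv_mul_eq_div, le_div_iff₀ (by positivity)] at this
  · rw [← lt_iSup_iff]
    change _ < M
    rw [← hM]
    exact (ENNReal.ofReal_lt_ofReal_iff hM0).2 hs_lt

lemma volume_slice_le_one (hK : K ⊆ Icc 0 1) (t : ℝ) : volume (slice K t) ≤ 1 :=
  (measure_mono (slice_subset_Icc hK t)).trans_eq (by simp [Real.volume_Icc_pi])

lemma exists_image_eq_Icc (hKc : IsCompact K) (hKv : Convex ℝ K) (hK : K ⊆ Icc 0 1)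
    (hne : K.Nonempty) : ∃ a b, 0 ≤ a ∧ b ≤ 1 ∧ (fun x ↦ x 0) '' K = Icc a b := by
  have hIc := hKc.image (continuous_apply 0)
  have hIne := hne.image fun x : Fin (m + 1) → ℝ ↦ x 0
  obtain ⟨xa, hxa, hxa0⟩ := hIc.sInf_mem hIne
  obtain ⟨xb, hxb, hxb0⟩ := hIc.sSup_mem hIne
  exact ⟨_, _, hxa0 ▸ (hK hxa).1 0, hxb0 ▸ (hK hxb).2 0, eq_Icc_of_connected_compact
    ((hKv.isConnected hne).image _ (continuous_apply 0).continuousOn) hIc⟩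

lemma exists_mem_grid_volume_slice_ge (hKc : IsCompact K) (hKv : Convex ℝ K) (hK : K ⊆ Icc 0 1)
    {ε : ℝ} (hε : 0 < ε) (hvol : ENNReal.ofReal ε ≤ volume K) :
    ∃ s : ℕ, (2 : ℝ) ^ s ≤ ε⁻¹ ∧ ∃ t ∈ grid (ε * 2 ^ s / 2),
      ENNReal.ofReal (2 ^ (s + m + 1))⁻¹ ≤ volume (slice K t) := by
  have hne : K.Nonempty :=
    nonempty_of_measure_ne_zero ((ENNReal.ofReal_pos.2 hε).trans_le hvol).ne'
  obtain ⟨a, b, ha, hb, hI⟩ := exists_image_eq_Icc hKc hKv hK hne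
  have hKab : ∀ x ∈ K, x 0 ∈ Icc a b := fun x hx ↦ hI ▸ mem_image_of_mem _ hx
  obtain ⟨s, hs, hba, tp, htp⟩ := exists_two_pow_le_and_volume_slice_gt hKc.measurableSet
    (by linarith) hKab (volume_slice_le_one hK) hε hvol
  have htp_mem : tp ∈ Icc a b := by
    obtain ⟨y, hy⟩ := nonempty_of_measure_ne_zero (ne_bot_of_gt htp)
    simpa using hKab _ hy
  obtain ⟨t, ht, htu, htv⟩ := exists_mem_grid_mem_Icc (by positivity : 0 < ε * 2 ^ s / 2)
    (u := (tp + a) / 2) (v := (tp + b) / 2) (by linarith [htp_mem.1])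
    (by linarith [htp_mem.2]) (by linarith)
  obtain ⟨x, hx, hx0⟩ : 2 * t - tp ∈ (fun x ↦ x 0) '' K :=
    hI ▸ ⟨by linarith, by linarith⟩
  refine ⟨s, hs, t, ht, ?_⟩
  calc ENNReal.ofReal (2 ^ (s + m + 1))⁻¹
      = ENNReal.ofReal (2 ^ m)⁻¹ * ENNReal.ofReal (2 ^ (s + 1))⁻¹ := by
        rw [← ENNReal.ofReal_mul (by positivity), ← mul_inv, ← pow_add]
        ring_nf
    _ ≤ ENNReal.ofReal (2 ^ m)⁻¹ * volume (slice K tp) := by gcongr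
    _ ≤ volume (slice K ((tp + x 0) / 2)) := ofReal_inv_two_pow_mul_volume_slice_le hKv hx tp
    _ = volume (slice K t) := by rw [show x 0 = 2 * t - tp from hx0]; ring_nf

end Slice

/-- A `(0,ε)`-net for `[0,1]^n`; testing only bodies inside the cube loses nothing, since
`Ξ ∩ [0,1]^n` is again compact and convex. -/
def IsNet {n : ℕ} (ε : ℝ) (P : Finset (Fin n → ℝ)) : Prop :=
  (P : Set (Fin n → ℝ)) ⊆ Icc 0 1 ∧
    ∀ K : Set (Fin n → ℝ), IsCompact K → Convex ℝ K → K ⊆ Icc 0 1 →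
      ENNReal.ofReal ε ≤ volume K → ∃ p ∈ P, p ∈ K

/-- Nets for `[0,1]^(n+1)`, so `n = d - 1`; unlike `log ε⁻¹`, the factor `1 + log ε⁻¹` stays
`≥ 1` as `ε → 1`. -/
def HasNets (n : ℕ) (C : ℝ) : Prop :=
  ∀ ε ∈ Ioo (0 : ℝ) 1, ∃ P : Finset (Fin (n + 1) → ℝ),
    IsNet ε P ∧ (P.card : ℝ) ≤ C * ε⁻¹ * (1 + Real.log ε⁻¹) ^ n

lemma hasNets_zero : HasNets 0 2 := by
  intro ε ⟨hε0, hε1⟩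
  refine ⟨(grid ε).image fun t ↦ Fin.cons t 0, ⟨?_, ?_⟩, ?_⟩
  · simp only [Finset.coe_image, image_subset_iff]
    exact fun t ht ↦ cons_mem_Icc_zero_one.2 ⟨grid_subset_Icc hε0 ht, by simp⟩
  · intro K hKc hKv hK hvol
    have hne : K.Nonempty :=
      nonempty_of_measure_ne_zero ((ENNReal.ofReal_pos.2 hε0).trans_le hvol).ne'
    obtain ⟨a, b, ha, hb, hI⟩ := exists_image_eq_Icc hKc hKv hK hne
    have hεab : ε ≤ b - a := by
      have hvol' : ENNReal.ofReal ε ≤ ENNReal.ofReal (b - a) := calc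
        ENNReal.ofReal ε ≤ volume K := hvol
        _ ≤ (⨆ t, volume (slice K t)) * ENNReal.ofReal (b - a) :=
          volume_le_iSup_volume_slice_mul hKc.measurableSet
            fun x hx ↦ hI ▸ mem_image_of_mem (fun x : Fin 1 → ℝ ↦ x 0) hx
        _ ≤ ENNReal.ofReal (b - a) :=
          mul_le_of_le_one_left' (iSup_le (volume_slice_le_one hK))
      exact (ENNReal.ofReal_le_ofReal_iff').1 hvol' |>.resolve_right hε0.not_ge
    obtain ⟨t, ht, htab⟩ := exists_mem_grid_mem_Icc hε0 ha hb hεab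
    obtain ⟨x, hx, rfl⟩ := hI ▸ htab
    refine ⟨x, Finset.mem_image.2 ⟨x 0, ht, ?_⟩, hx⟩
    rw [← Fin.cons_self_tail x, Subsingleton.elim (Fin.tail x) 0]
    rfl
  · calc ((grid ε).image fun t ↦ (Fin.cons t 0 : Fin 1 → ℝ)).card
        ≤ ((grid ε).card : ℝ) := by exact_mod_cast Finset.card_image_le
      _ ≤ ε⁻¹ + 1 := card_grid_le hε0
      _ ≤ 2 * ε⁻¹ * (1 + Real.log ε⁻¹) ^ 0 := by
          rw [pow_zero, mul_one, two_mul]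
          gcongr
          exact (one_le_inv₀ hε0).2 hε1.le

lemma inv_two_pow_mem_Ioo {k : ℕ} (hk : k ≠ 0) : ((2 : ℝ) ^ k)⁻¹ ∈ Ioo (0 : ℝ) 1 :=
  ⟨by positivity, inv_lt_one_of_one_lt₀ (one_lt_pow₀ one_lt_two hk)⟩

def dyadicNet {m : ℕ} (ε : ℝ) (S : ℕ) (Q : ℕ → Finset (Fin m → ℝ)) :
    Finset (Fin (m + 1) → ℝ) :=
  (Finset.range (S + 1)).biUnion fun s ↦
    (grid (ε * 2 ^ s / 2) ×ˢ Q s).image fun p ↦ Fin.cons p.1 p.2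

section DyadicNet

variable {m S : ℕ} {ε : ℝ} {Q : ℕ → Finset (Fin m → ℝ)}

lemma cons_mem_dyadicNet {s : ℕ} (hs : s ≤ S) {t : ℝ} (ht : t ∈ grid (ε * 2 ^ s / 2))
    {q : Fin m → ℝ} (hq : q ∈ Q s) : Fin.cons t q ∈ dyadicNet ε S Q := by
  simp only [dyadicNet, Finset.mem_biUnion, Finset.mem_range, Finset.mem_image,
    Finset.mem_product]
  exact ⟨s, by omega, (t, q), ⟨ht, hq⟩, rfl⟩

lemma dyadicNet_subset_Icc (hε : 0 < ε) (hQ : ∀ s, (Q s : Set (Fin m → ℝ)) ⊆ Icc 0 1) :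
    (dyadicNet ε S Q : Set (Fin (m + 1) → ℝ)) ⊆ Icc 0 1 := by
  simp only [dyadicNet, Finset.coe_biUnion, Finset.coe_image, iUnion_subset_iff,
    image_subset_iff]
  rintro s - ⟨t, q⟩ htq
  rw [Finset.mem_coe, Finset.mem_product] at htq
  exact cons_mem_Icc_zero_one.2 ⟨grid_subset_Icc (by positivity) htq.1, hQ s htq.2⟩

lemma card_dyadicNet_le :
    (dyadicNet ε S Q).card ≤
      ∑ s ∈ Finset.range (S + 1), (grid (ε * 2 ^ s / 2)).card * (Q s).card :=
  Finset.card_biUnion_le.trans <| Finset.sum_le_sum fun _ _ ↦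
    Finset.card_image_le.trans (Finset.card_product _ _).le

end DyadicNet

lemma nat_le_two_mul_log_of_two_pow_le {k : ℕ} {x : ℝ} (h : (2 : ℝ) ^ k ≤ x) :
    (k : ℝ) ≤ 2 * Real.log x := by
  have hlog := Real.log_le_log (by positivity) h
  rw [Real.log_pow] at hlog
  nlinarith [Real.log_two_gt_d9, (k.cast_nonneg : (0 : ℝ) ≤ k)]

/-- The size of level `s` of `dyadicNet`, given the bound of `HasNets n C` at scale
`2^-(s+n+2)`. -/
lemma card_grid_mul_le {ε C : ℝ} (hε : 0 < ε) (hC : 0 ≤ C) {n s q : ℕ}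
    (hs : (2 : ℝ) ^ s ≤ ε⁻¹)
    (hq : (q : ℝ) ≤ C * 2 ^ (s + n + 2) * (1 + Real.log (2 ^ (s + n + 2))) ^ n) :
    (grid (ε * 2 ^ s / 2)).card * q ≤
      2 ^ (n + 4) * (n + 3) ^ n * C * ε⁻¹ * (1 + Real.log ε⁻¹) ^ n := by
  have hu : ε * 2 ^ s ≤ 1 := by
    calc ε * 2 ^ s ≤ ε * ε⁻¹ := by gcongr
      _ = 1 := mul_inv_cancel₀ hε.ne'
  have hgrid : ((grid (ε * 2 ^ s / 2)).card : ℝ) ≤ 4 / (ε * 2 ^ s) := by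
    have h1 : 1 ≤ 2 / (ε * 2 ^ s) := by rw [le_div_iff₀ (by positivity)]; linarith
    have := card_grid_le (by positivity : 0 < ε * 2 ^ s / 2)
    rw [inv_div] at this
    linarith [show 4 / (ε * 2 ^ s) = 2 * (2 / (ε * 2 ^ s)) by ring]
  have hlog : 1 + Real.log (2 ^ (s + n + 2)) ≤ (n + 3) * (1 + Real.log ε⁻¹) := by
    have := nat_le_two_mul_log_of_two_pow_le hs
    have := Real.log_nonneg ((one_le_pow₀ one_le_two).trans hs)
    rw [Real.log_pow]
    push_cast
    nlinarith [Real.log_two_lt_d9, (n.cast_nonneg : (0 : ℝ) ≤ n)]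
  calc (grid (ε * 2 ^ s / 2)).card * (q : ℝ)
      ≤ (4 / (ε * 2 ^ s)) * (C * 2 ^ (s + n + 2) * (1 + Real.log (2 ^ (s + n + 2))) ^ n) :=
        mul_le_mul hgrid hq q.cast_nonneg (by positivity)
    _ = 2 ^ (n + 4) * C * ε⁻¹ * (1 + Real.log (2 ^ (s + n + 2))) ^ n := by
        field_simp
        ring
    _ ≤ 2 ^ (n + 4) * C * ε⁻¹ * ((n + 3) * (1 + Real.log ε⁻¹)) ^ n := by
        have : 0 ≤ 1 + Real.log (2 ^ (s + n + 2)) := by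
          rw [Real.log_pow]; positivity
        gcongr
    _ = _ := by rw [mul_pow]; ring

lemma HasNets.succ {n : ℕ} {C : ℝ} (hC : 0 ≤ C) (h : HasNets n C) :
    HasNets (n + 1) (2 ^ (n + 5) * (n + 3) ^ n * C) := by
  intro ε ⟨hε0, hε1⟩
  choose Q hQ hQ_card using fun s : ℕ ↦ h _ (inv_two_pow_mem_Ioo (k := s + n + 2) (by omega))
  simp only [inv_inv] at hQ_card
  set S := Nat.log 2 ⌊ε⁻¹⌋₊
  have hS : (2 : ℝ) ^ S ≤ ε⁻¹ := by
    have hfloor : ⌊ε⁻¹⌋₊ ≠ 0 := (Nat.floor_pos.2 ((one_le_inv₀ hε0).2 hε1.le)).ne'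
    calc (2 : ℝ) ^ S ≤ ⌊ε⁻¹⌋₊ := by exact_mod_cast Nat.pow_log_le_self 2 hfloor
      _ ≤ ε⁻¹ := Nat.floor_le (by positivity)
  refine ⟨dyadicNet ε S Q, ⟨dyadicNet_subset_Icc hε0 fun s ↦ (hQ s).1, ?_⟩, ?_⟩
  · intro K hKc hKv hK hvol
    obtain ⟨s, hs, t, ht, hslice⟩ := exists_mem_grid_volume_slice_ge hKc hKv hK hε0 hvol
    obtain ⟨q, hq, hqK⟩ := (hQ s).2 (slice K t) (isCompact_slice hKc t)
      (convex_slice hKv t) (slice_subset_Icc hK t) (by simpa [add_assoc] using hslice)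
    exact ⟨_, cons_mem_dyadicNet
      (Nat.le_log_of_pow_le one_lt_two (Nat.le_floor (by exact_mod_cast hs))) ht hq, hqK⟩
  · have hS_log := nat_le_two_mul_log_of_two_pow_le hS
    set T := 2 ^ (n + 4) * (n + 3) ^ n * C * ε⁻¹ * (1 + Real.log ε⁻¹) ^ n with hT_def
    have hT : 0 ≤ T := by
      have := Real.log_nonneg ((one_le_inv₀ hε0).2 hε1.le)
      rw [hT_def]
      positivity
    calc ((dyadicNet ε S Q).card : ℝ)
        ≤ ∑ s ∈ Finset.range (S + 1), ((grid (ε * 2 ^ s / 2)).card * (Q s).card : ℝ) := by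
          exact_mod_cast card_dyadicNet_le
      _ ≤ ∑ s ∈ Finset.range (S + 1), T := Finset.sum_le_sum fun s hs ↦
          card_grid_mul_le hε0 hC ((pow_le_pow_right₀ one_le_two
            (Nat.lt_succ_iff.1 (Finset.mem_range.1 hs))).trans hS) (hQ_card s)
      _ = (S + 1) * T := by simp
      _ ≤ (2 * (1 + Real.log ε⁻¹)) * T := by gcongr; linarith
      _ = _ := by ring

lemma exists_pos_hasNets (n : ℕ) : ∃ C, 0 < C ∧ HasNets n C := by
  induction n with
  | zero => exact ⟨2, two_pos, hasNets_zero⟩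
  | succ n ih =>
    obtain ⟨C, hC, h⟩ := ih
    exact ⟨_, by positivity, h.succ hC.le⟩

lemma inv_mul_one_add_log_inv_pow_le {ε : ℝ} (hε : ε ∈ Ioo (0 : ℝ) 1) (n : ℕ) :
    ε⁻¹ * (1 + Real.log ε⁻¹) ^ n ≤ 3 * 2 ^ n * (ε⁻¹ * Real.log ε⁻¹ ^ n + 1) := by
  have hε_inv : 1 ≤ ε⁻¹ := (one_le_inv₀ hε.1).2 hε.2.le
  have hℓ : 0 ≤ Real.log ε⁻¹ := Real.log_nonneg hε_inv
  have hmain : 0 ≤ ε⁻¹ * Real.log ε⁻¹ ^ n := by positivity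
  rcases le_or_gt 1 (Real.log ε⁻¹) with h1 | h1
  · calc ε⁻¹ * (1 + Real.log ε⁻¹) ^ n ≤ ε⁻¹ * (2 * Real.log ε⁻¹) ^ n := by
          gcongr; linarith
      _ = 2 ^ n * (ε⁻¹ * Real.log ε⁻¹ ^ n) := by ring
      _ ≤ _ := by nlinarith [pow_pos (two_pos : (0 : ℝ) < 2) n]
  · have hε3 : ε⁻¹ ≤ 3 := by
      calc ε⁻¹ = Real.exp (Real.log ε⁻¹) := (Real.exp_log (by positivity)).symm
        _ ≤ Real.exp 1 := Real.exp_le_exp.2 h1.le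
        _ ≤ 3 := by linarith [Real.exp_one_lt_d9]
    calc ε⁻¹ * (1 + Real.log ε⁻¹) ^ n ≤ 3 * 2 ^ n := by
          gcongr
          linarith
      _ ≤ _ := by nlinarith [pow_pos (two_pos : (0 : ℝ) < 2) n]

lemma preimage_toLp_unitCube (d : ℕ) : WithLp.toLp 2 ⁻¹' unitCube d = Icc 0 1 := by
  ext x
  simp [unitCube, Pi.le_def, forall_and]

lemma IsNet.exists_toLp_mem {d : ℕ} {ε : ℝ} {P : Finset (Fin d → ℝ)} (hP : IsNet ε P)
    {Ξ : Set (EuclideanSpace ℝ (Fin d))} (hc : IsCompact Ξ) (hv : Convex ℝ Ξ)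
    (hvol : ENNReal.ofReal ε ≤ volume (Ξ ∩ unitCube d)) :
    ∃ p ∈ P, WithLp.toLp 2 p ∈ Ξ := by
  have hK : WithLp.toLp 2 ⁻¹' (Ξ ∩ unitCube d) = WithLp.toLp 2 ⁻¹' Ξ ∩ Icc 0 1 := by
    rw [preimage_inter, preimage_toLp_unitCube]
  obtain ⟨p, hp, hpΞ, -⟩ := hP.2 (WithLp.toLp 2 ⁻¹' (Ξ ∩ unitCube d))
    (hK ▸ isCompact_Icc.inter_left (hc.isClosed.preimage (PiLp.continuous_toLp 2 _)))
    (hK ▸ (hv.linear_preimage (WithLp.linearEquiv 2 ℝ (Fin d → ℝ)).symm.toLinearMap).inter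
      (convex_Icc 0 1))
    (hK ▸ inter_subset_right)
    (hvol.trans_eq ((EuclideanSpace.volume_preserving_symm_measurableEquiv_toLp
      (Fin d)).symm.measure_preimage_equiv _).symm)
  exact ⟨p, hp, hpΞ⟩

end WeakEpsNet

/-- For every `d ≥ 2` there is a constant `C_d > 0` such that for every `ε ∈ (0,1)` there
is a `(0,ε)`-net for `[0,1]^d`, i.e. a point set `P ⊆ [0,1]^d` of size
`O_d(ε⁻¹ log^{d-1}(1/ε))` meeting every compact convex set `Ξ` with
`vol(Ξ ∩ [0,1]^d) ≥ ε`. -/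
theorem weak_eps_net_points (d : ℕ) (hd : 2 ≤ d) :
    ∃ C : ℝ, 0 < C ∧ ∀ ε : ℝ, ε ∈ Set.Ioo (0 : ℝ) 1 →
      ∃ P : Finset (EuclideanSpace ℝ (Fin d)),
        ↑P ⊆ unitCube d ∧
        (P.card : ℝ) ≤ C * ε⁻¹ * (Real.log (1 / ε)) ^ (d - 1) + C ∧
        ∀ Ξ : Set (EuclideanSpace ℝ (Fin d)), IsCompact Ξ → Convex ℝ Ξ →
          ENNReal.ofReal ε ≤ volume (Ξ ∩ unitCube d) → ∃ p ∈ P, p ∈ Ξ := by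
  obtain ⟨n, rfl⟩ : ∃ n, d = n + 1 := ⟨d - 1, by omega⟩
  obtain ⟨C, hC, hnets⟩ := WeakEpsNet.exists_pos_hasNets n
  refine ⟨3 * 2 ^ n * C, by positivity, fun ε hε ↦ ?_⟩
  obtain ⟨P, hP, hP_card⟩ := hnets ε hε
  refine ⟨P.image (WithLp.toLp 2), ?_, ?_, fun Ξ hc hv hvol ↦ ?_⟩
  · rw [Finset.coe_image, Set.image_subset_iff, WeakEpsNet.preimage_toLp_unitCube]
    exact hP.1
  · rw [one_div, Nat.add_sub_cancel]
    calc ((P.image (WithLp.toLp 2)).card : ℝ) ≤ P.card := by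
          exact_mod_cast Finset.card_image_le
      _ ≤ C * (ε⁻¹ * (1 + Real.log ε⁻¹) ^ n) := by rwa [← mul_assoc]
      _ ≤ C * (3 * 2 ^ n * (ε⁻¹ * Real.log ε⁻¹ ^ n + 1)) :=
          mul_le_mul_of_nonneg_left (WeakEpsNet.inv_mul_one_add_log_inv_pow_le hε n) hC.le
      _ = _ := by ring
  · obtain ⟨p, hp, hpΞ⟩ := WeakEpsNet.IsNet.exists_toLp_mem hP hc hv hvol
    exact ⟨_, Finset.mem_image_of_mem _ hp, hpΞ⟩
end
end

section
/- There exists a constant C > 0 such that for every dimension d ≥ 1 and every ε ∈ (0,1), there exists a finite set P ⊆ [0,1]^d with |P| ≤ 2^{C·d·log d}/ε such that every closed axis-aligned box B ⊆ [0,1]^d with vol(B) ≥ ε contains a point of P. -/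
/-!
Faure's construction. Fix a prime `q` with `d < q ≤ 2d` and index points by the polynomials `f`
over `𝔽_q` of degree `< m`: the `i`-th coordinate of the point of `f` is the number in `[0, 1]`
whose base-`q` digits are the Taylor coefficients of `f` at `i ∈ 𝔽_q`. A nonzero `f` whose Taylor
coefficients of order `< kᵢ` at each `i` vanish is divisible by `∏ (X - i) ^ kᵢ`, so reading off
these coefficients is injective, hence surjective (Hermite interpolation), once `∑ kᵢ ≤ m`: any
product of `q`-adic intervals `[tᵢ / q^kᵢ, (tᵢ + 1) / q^kᵢ]` with `∑ kᵢ ≤ m` contains a point.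
A box of volume `ε` with sides `ℓᵢ` contains such a product with `ℓᵢ q^kᵢ ≥ 2` and
`∑ kᵢ ≤ d + log_q (2^d / ε) + 1`, so this `m` works and gives `q^m ≤ q^(d+1) 2^d / ε ≤ d^(4d) / ε`
points. In dimension one the grid `εℤ ∩ (0, 1]` already has at most `1 / ε` points.
-/

open MeasureTheory

noncomputable section

open Finset Polynomial

namespace Polynomial

theorem X_pow_dvd_taylor_iff {R : Type*} [CommRing R] {r : R} {f : R[X]} {k : ℕ} :
    X ^ k ∣ taylor r f ↔ (X - C r) ^ k ∣ f := by
  have h : taylor r ((X - C r) ^ k) = X ^ k := by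
    rw [taylor_pow, map_sub, taylor_X, taylor_C, add_sub_cancel_right]
  rw [← map_dvd_iff (taylorEquiv r) (a := (X - C r) ^ k)]
  exact h ▸ Iff.rfl

variable {K ι : Type*} [Field K] [Fintype ι] {c : ι → K}

theorem eq_zero_of_degree_lt_of_taylor_coeff_eq_zero (hc : Function.Injective c) {k : ι → ℕ}
    {f : K[X]} (hf : f.degree < ↑(∑ i, k i)) (h : ∀ i, ∀ j < k i, (taylor (c i) f).coeff j = 0) :
    f = 0 := by
  by_contra hf0
  have hdvd : ∏ i, (X - C (c i)) ^ k i ∣ f :=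
    Finset.prod_dvd_of_coprime (fun i _ j _ hij => ((pairwise_coprime_X_sub_C hc) hij).pow)
      fun i _ => X_pow_dvd_taylor_iff.1 (X_pow_dvd_iff.2 (h i))
  have hdeg := degree_le_of_dvd hdvd hf0
  simp only [degree_prod, degree_pow, degree_X_sub_C, nsmul_one] at hdeg
  exact absurd hf (not_lt.2 (by exact_mod_cast hdeg))

theorem exists_mem_degreeLT_taylor_coeff_eq (hc : Function.Injective c) {k : ι → ℕ} {m : ℕ}
    (hm : ∑ i, k i ≤ m) (w : ∀ i, Fin (k i) → K) :
    ∃ f ∈ degreeLT K m, ∀ i (j : Fin (k i)), (taylor (c i) f).coeff j = w i j := by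
  have := (degreeLTEquiv K (∑ i, k i)).symm.finiteDimensional
  let L : degreeLT K (∑ i, k i) →ₗ[K] ∀ i, Fin (k i) → K :=
    LinearMap.pi fun i => LinearMap.pi fun j =>
      lcoeff K j ∘ₗ taylor (c i) ∘ₗ (degreeLT K (∑ i, k i)).subtype
  have hinj : Function.Injective L := (injective_iff_map_eq_zero L).2 fun f hf =>
    Subtype.ext <| eq_zero_of_degree_lt_of_taylor_coeff_eq_zero hc (mem_degreeLT.1 f.2)
      fun i j hj => congr_fun (congr_fun hf i) ⟨j, hj⟩
  have hrank : Module.finrank K (degreeLT K (∑ i, k i)) =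
      Module.finrank K (∀ i, Fin (k i) → K) := by
    simp [(degreeLTEquiv K _).finrank_eq, Module.finrank_pi_fintype]
  obtain ⟨f, hf⟩ := (LinearMap.injective_iff_surjective_of_finrank_eq_finrank hrank).1 hinj w
  exact ⟨f, degreeLT_mono hm f.2, fun i j => congr_fun (congr_fun hf i) j⟩

end Polynomial

section Digits

variable {q : ℕ}

theorem Nat.sum_range_div_pow_mod_mul_pow {k t : ℕ} (ht : t < q ^ k) :
    ∑ i ∈ range k, t / q ^ i % q * q ^ i = t := by
  have h := finFunctionFinEquiv_apply (finFunctionFinEquiv.symm ⟨t, ht⟩)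
  rw [Equiv.apply_symm_apply] at h
  simpa [finFunctionFinEquiv_symm_apply_val, Fin.sum_univ_eq_sum_range
    (fun i => t / q ^ i % q * q ^ i)] using h.symm

theorem sum_Ico_div_pow_le {δ : ℕ → ℕ} (hδ : ∀ j, δ j < q) {k m : ℕ} (hkm : k ≤ m) :
    ∑ j ∈ Ico k m, (δ j : ℝ) / q ^ (j + 1) ≤ 1 / q ^ k - 1 / q ^ m := by
  have hq : (0 : ℝ) < q := Nat.cast_pos.2 ((Nat.zero_le _).trans_lt (hδ 0))
  induction m, hkm using Nat.le_induction with
  | base => simp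
  | succ m hkm ih =>
    have hδm : (δ m : ℝ) ≤ q - 1 := by
      have := hδ m
      rw [le_sub_iff_add_le]
      exact_mod_cast this
    calc ∑ j ∈ Ico k (m + 1), (δ j : ℝ) / q ^ (j + 1)
        = ∑ j ∈ Ico k m, (δ j : ℝ) / q ^ (j + 1) + δ m / q ^ (m + 1) := sum_Ico_succ_top hkm _
      _ ≤ (1 / q ^ k - 1 / q ^ m) + (q - 1) / q ^ (m + 1) := by gcongr
      _ = 1 / q ^ k - 1 / q ^ (m + 1) := by field_simp; ring

theorem sum_range_div_pow_mem_Icc {δ : ℕ → ℕ} (hδ : ∀ j, δ j < q) {k m t : ℕ} (hkm : k ≤ m)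
    (ht : t < q ^ k) (hδt : ∀ j < k, δ j = t / q ^ (k - 1 - j) % q) :
    ∑ j ∈ range m, (δ j : ℝ) / q ^ (j + 1) ∈ Set.Icc (t / q ^ k : ℝ) ((t + 1) / q ^ k) := by
  have hq : (0 : ℝ) < q := Nat.cast_pos.2 ((Nat.zero_le _).trans_lt (hδ 0))
  have head : ∑ j ∈ range k, (δ j : ℝ) / q ^ (j + 1) = t / q ^ k := by
    rw [← Nat.sum_range_div_pow_mod_mul_pow ht]
    rw [← sum_range_reflect (fun i => t / q ^ i % q * q ^ i), Nat.cast_sum, sum_div]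
    refine sum_congr rfl fun j hj => ?_
    have hjk := mem_range.1 hj
    rw [hδt j hjk, div_eq_div_iff (by positivity) (by positivity), Nat.cast_mul, mul_assoc,
      Nat.cast_pow, ← pow_add, show k - 1 - j + (j + 1) = k by omega]
  have tail_nonneg : 0 ≤ ∑ j ∈ Ico k m, (δ j : ℝ) / q ^ (j + 1) := by positivity
  have tail_le := sum_Ico_div_pow_le hδ hkm
  rw [← sum_range_add_sum_Ico _ hkm, head, add_div]
  constructor
  · linarith
  · have : (0 : ℝ) ≤ 1 / q ^ m := by positivity
    linarith

end Digits

def faurePoint (q d m : ℕ) (f : (ZMod q)[X]) : EuclideanSpace ℝ (Fin d) :=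
  WithLp.toLp 2 fun i =>
    ∑ j ∈ range m, ((taylor ((i : ℕ) : ZMod q) f).coeff j).val / (q : ℝ) ^ (j + 1)

open Classical in
def faureNet (q d m : ℕ) [NeZero q] : Finset (EuclideanSpace ℝ (Fin d)) :=
  univ.image fun v : Fin m → ZMod q => faurePoint q d m ((degreeLTEquiv (ZMod q) m).symm v)

section FaureNet

variable {q d m : ℕ}

theorem card_faureNet_le [NeZero q] : #(faureNet q d m) ≤ q ^ m := by
  unfold faureNet
  exact card_image_le.trans (by simp)

theorem faurePoint_mem_unitCube [NeZero q] (f : (ZMod q)[X]) :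
    faurePoint q d m f ∈ unitCube d := fun i => by
  simpa [faurePoint] using sum_range_div_pow_mem_Icc
    (δ := fun j => ((taylor ((i : ℕ) : ZMod q) f).coeff j).val) (fun j => ZMod.val_lt _)
    m.zero_le (t := 0) (pow_pos (NeZero.pos q) 0) (by simp)

theorem faureNet_subset_unitCube [NeZero q] : ↑(faureNet q d m) ⊆ unitCube d := by
  unfold faureNet
  simp only [coe_image, Set.image_subset_iff]
  exact fun v _ => faurePoint_mem_unitCube _

theorem exists_mem_faureNet [Fact q.Prime] (hdq : d ≤ q) {k t : Fin d → ℕ} (hkm : ∑ i, k i ≤ m)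
    (ht : ∀ i, t i < q ^ k i) :
    ∃ p ∈ faureNet q d m, ∀ i, p i ∈ Set.Icc (t i / q ^ k i : ℝ) ((t i + 1) / q ^ k i) := by
  have hc : Function.Injective fun i : Fin d => ((i : ℕ) : ZMod q) := fun i j hij => by
    have := congrArg ZMod.val hij
    rwa [ZMod.val_natCast_of_lt (i.2.trans_le hdq), ZMod.val_natCast_of_lt (j.2.trans_le hdq),
      Fin.val_inj] at this
  obtain ⟨f, hf, hcoeff⟩ := exists_mem_degreeLT_taylor_coeff_eq hc hkm
    fun i j => ((t i / q ^ (k i - 1 - j) % q : ℕ) : ZMod q)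
  refine ⟨faurePoint q d m f, ?_, fun i => ?_⟩
  · unfold faureNet
    exact mem_image.2 ⟨degreeLTEquiv _ m ⟨f, hf⟩, mem_univ _, by simp⟩
  · refine sum_range_div_pow_mem_Icc (fun j => ZMod.val_lt _)
      ((single_le_sum (fun _ _ => Nat.zero_le _) (mem_univ i)).trans hkm) (ht i) fun j hj => ?_
    rw [hcoeff i ⟨j, hj⟩, ZMod.val_natCast, Nat.mod_mod]

end FaureNet

def closedBox {ι : Type*} (a b : ι → ℝ) : Set (EuclideanSpace ℝ ι) :=
  {x | ∀ i, x i ∈ Set.Icc (a i) (b i)}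

section Box

variable {ι : Type*} [Fintype ι] {a b : ι → ℝ}

theorem volume_closedBox : volume (closedBox a b) = ∏ i, ENNReal.ofReal (b i - a i) := by
  have : closedBox a b = WithLp.ofLp ⁻¹' Set.Icc a b := by
    ext x
    simp [closedBox, Pi.le_def, forall_and]
  rw [this, (PiLp.volume_preserving_ofLp ι).measure_preimage measurableSet_Icc.nullMeasurableSet,
    Real.volume_Icc_pi]

theorem le_prod_sub_of_ofReal_le_volume_closedBox {ε : ℝ} (hε : 0 < ε)
    (h : ENNReal.ofReal ε ≤ volume (closedBox a b)) :
    (∀ i, a i ≤ b i) ∧ ε ≤ ∏ i, (b i - a i) := by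
  have hab : ∀ i, a i ≤ b i := by
    by_contra! ⟨j, hj⟩
    have : closedBox a b = ∅ :=
      Set.eq_empty_of_forall_notMem fun x hx => ((hx j).1.trans (hx j).2).not_gt hj
    simp only [this, measure_empty, nonpos_iff_eq_zero, ENNReal.ofReal_eq_zero] at h
    linarith
  have hnonneg : ∀ i ∈ univ, 0 ≤ b i - a i := fun i _ => sub_nonneg.2 (hab i)
  rw [volume_closedBox, ← ENNReal.ofReal_prod_of_nonneg hnonneg,
    ENNReal.ofReal_le_ofReal_iff (prod_nonneg hnonneg)] at h
  exact ⟨hab, h⟩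

theorem exists_two_le_mul_pow_and_sum_le {q : ℝ} (hq : 1 < q) {ℓ : ι → ℝ} (hℓ0 : ∀ i, 0 ≤ ℓ i) (hℓ2 : ∀ i, ℓ i ≤ 2)
    {M : ℕ} (hM : 2 ^ Fintype.card ι < q ^ M * ∏ i, ℓ i) :
    ∃ k : ι → ℕ, (∀ i, 2 ≤ ℓ i * q ^ k i) ∧ ∑ i, k i ≤ Fintype.card ι + M := by
  have hprod : 0 < ∏ i, ℓ i :=
    pos_of_mul_pos_right ((pow_pos two_pos _).trans hM) (pow_nonneg (by linarith) _)
  have hℓ : ∀ i, 0 < ℓ i := fun i =>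
    (hℓ0 i).lt_of_ne' fun h => hprod.ne' (prod_eq_zero (mem_univ i) h)
  choose n hn using fun i => exists_nat_pow_near ((one_le_div (hℓ i)).2 (hℓ2 i)) hq
  refine ⟨fun i => n i + 1, fun i => ?_, ?_⟩
  · have := (div_lt_iff₀ (hℓ i)).1 (hn i).2
    linarith
  · have key : q ^ ∑ i, n i < q ^ M :=
      calc q ^ ∑ i, n i = ∏ i, q ^ n i := (prod_pow_eq_pow_sum _ _ _).symm
        _ ≤ ∏ i, (2 / ℓ i) := prod_le_prod (fun i _ => by positivity) fun i _ => (hn i).1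
        _ = 2 ^ Fintype.card ι / ∏ i, ℓ i := by rw [prod_div_distrib, prod_const, card_univ]
        _ < q ^ M := (div_lt_iff₀ hprod).2 hM
    have := (pow_lt_pow_iff_right₀ hq).1 key
    simp only [sum_add_distrib, sum_const, card_univ, smul_eq_mul, mul_one]
    omega

end Box

theorem exists_nat_le_div_and_succ_div_le {Q a b : ℝ} (hQ : 0 < Q) (ha : 0 ≤ a) (h : 2 ≤ (b - a) * Q) :
    ∃ t : ℕ, a ≤ t / Q ∧ (t + 1) / Q ≤ b := by
  refine ⟨⌈a * Q⌉₊, (le_div_iff₀ hQ).2 (Nat.le_ceil _), (div_le_iff₀ hQ).2 ?_⟩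
  linarith [Nat.ceil_lt_add_one (mul_nonneg ha hQ.le)]

section UnitCube

variable {d : ℕ} {a b : Fin d → ℝ}

theorem nonneg_and_le_one_of_closedBox_subset_unitCube (hab : ∀ i, a i ≤ b i)
    (h : closedBox a b ⊆ unitCube d) (i : Fin d) : 0 ≤ a i ∧ b i ≤ 1 :=
  ⟨(h (show WithLp.toLp 2 a ∈ closedBox a b from fun j => ⟨le_rfl, hab j⟩) i).1,
    (h (show WithLp.toLp 2 b ∈ closedBox a b from fun j => ⟨hab j, le_rfl⟩) i).2⟩

theorem exists_qadic_box_subset {q : ℕ} (hq : 1 < q) {ε : ℝ} (hε : 0 < ε) {M : ℕ}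
    (hM : 2 ^ d < (q : ℝ) ^ M * ε) (hsub : closedBox a b ⊆ unitCube d)
    (hvol : ENNReal.ofReal ε ≤ volume (closedBox a b)) :
    ∃ k t : Fin d → ℕ, ∑ i, k i ≤ d + M ∧
      ∀ i, t i < q ^ k i ∧ a i ≤ t i / (q : ℝ) ^ k i ∧ (t i + 1) / (q : ℝ) ^ k i ≤ b i := by
  obtain ⟨hab, hprod⟩ := le_prod_sub_of_ofReal_le_volume_closedBox hε hvol
  have h01 := nonneg_and_le_one_of_closedBox_subset_unitCube hab hsub
  obtain ⟨k, hk, hsum⟩ := exists_two_le_mul_pow_and_sum_le (q := q) (by exact_mod_cast hq)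
    (fun i => sub_nonneg.2 (hab i)) (fun i => by linarith [h01 i]) (M := M)
    (by simpa using hM.trans_le (by gcongr))
  have hQ : ∀ i, (0 : ℝ) < q ^ k i := fun i => by positivity
  choose t ht using fun i => exists_nat_le_div_and_succ_div_le (hQ i) (h01 i).1 (hk i)
  refine ⟨k, t, by simpa using hsum, fun i => ⟨?_, ht i⟩⟩
  have := (div_le_one (hQ i)).1 ((ht i).2.trans (h01 i).2)
  exact_mod_cast (by linarith : (t i : ℝ) < q ^ k i)

theorem exists_unitCube_net_one_dim {ε : ℝ} (hε : 0 < ε) :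
    ∃ P : Finset (EuclideanSpace ℝ (Fin 1)), ↑P ⊆ unitCube 1 ∧ (#P : ℝ) ≤ 1 / ε ∧
      ∀ a b : Fin 1 → ℝ, closedBox a b ⊆ unitCube 1 →
        ENNReal.ofReal ε ≤ volume (closedBox a b) → ∃ p ∈ P, ∀ i, p i ∈ Set.Icc (a i) (b i) := by
  classical
  have hfloor : (⌊1 / ε⌋₊ : ℝ) ≤ 1 / ε := Nat.floor_le (by positivity)
  refine ⟨(Icc 1 ⌊1 / ε⌋₊).image fun k : ℕ => WithLp.toLp 2 fun _ => k * ε, ?_, ?_, ?_⟩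
  · simp only [coe_image, Set.image_subset_iff]
    intro k hk i
    have hk : (k : ℝ) ≤ ⌊1 / ε⌋₊ := Nat.cast_le.2 (mem_Icc.1 hk).2
    exact ⟨by positivity, (le_div_iff₀ hε).1 (hk.trans hfloor)⟩
  · refine le_trans ?_ hfloor
    exact_mod_cast card_image_le.trans (by simp)
  · intro a b hsub hvol
    obtain ⟨hab, hprod⟩ := le_prod_sub_of_ofReal_le_volume_closedBox hε hvol
    obtain ⟨ha, hb⟩ := nonneg_and_le_one_of_closedBox_subset_unitCube hab hsub 0
    rw [Fin.prod_univ_one] at hprod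
    have hbε : 0 ≤ b 0 / ε := div_nonneg (ha.trans (hab 0)) hε.le
    refine ⟨WithLp.toLp 2 fun _ => ⌊b 0 / ε⌋₊ * ε, mem_image_of_mem _ (mem_Icc.2 ⟨?_, ?_⟩),
      fun i => ?_⟩
    · exact Nat.le_floor (by rw [Nat.cast_one, le_div_iff₀ hε]; linarith)
    · exact Nat.floor_le_floor (by gcongr)
    · rw [Subsingleton.elim i 0]
      constructor
      · have := (div_lt_iff₀ hε).1 (Nat.lt_floor_add_one (b 0 / ε))
        linarith
      · exact (le_div_iff₀ hε).1 (Nat.floor_le hbε)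

end UnitCube

theorem pow_succ_mul_two_pow_le {d q : ℕ} (hd : 2 ≤ d) (hq : q ≤ 2 * d) :
    q ^ (d + 1) * 2 ^ d ≤ d ^ (4 * d) :=
  calc q ^ (d + 1) * 2 ^ d ≤ (d ^ 2) ^ (d + 1) * d ^ d := by gcongr; nlinarith
    _ = d ^ (3 * d + 2) := by ring
    _ ≤ d ^ (4 * d) := Nat.pow_le_pow_right (by omega) (by omega)

theorem natCast_pow_le_two_rpow {d : ℕ} (hd : 1 ≤ d) :
    (d : ℝ) ^ (4 * d) ≤ 2 ^ (6 * d * Real.log d) := by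
  have hd0 : (0 : ℝ) < d := by positivity
  rw [Real.rpow_def_of_pos two_pos, ← Real.exp_log (pow_pos hd0 _), Real.log_pow,
    Real.exp_le_exp]
  have := Real.log_two_gt_d9
  have := mul_nonneg hd0.le (Real.log_nonneg (by exact_mod_cast hd : (1 : ℝ) ≤ d))
  push_cast
  nlinarith

/-- There is a universal `C > 0` such that for every `d ≥ 1` and `ε ∈ (0,1)` there is a
point set of size at most `2^{C d log d}/ε` in `[0,1]^d` meeting every closed axis-aligned
box `B ⊆ [0,1]^d` of volume at least `ε`. -/
theorem box_net_high_dim :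
    ∃ C : ℝ, 0 < C ∧ ∀ d : ℕ, 1 ≤ d → ∀ ε : ℝ, ε ∈ Set.Ioo (0 : ℝ) 1 →
      ∃ P : Finset (EuclideanSpace ℝ (Fin d)),
        ↑P ⊆ unitCube d ∧
        (P.card : ℝ) ≤ (2 : ℝ) ^ (C * (d : ℝ) * Real.log d) / ε ∧
        ∀ a b : Fin d → ℝ,
          {x : EuclideanSpace ℝ (Fin d) | ∀ i, x i ∈ Set.Icc (a i) (b i)} ⊆ unitCube d →
          ENNReal.ofReal ε ≤
            volume {x : EuclideanSpace ℝ (Fin d) | ∀ i, x i ∈ Set.Icc (a i) (b i)} →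
          ∃ p ∈ P, ∀ i, p i ∈ Set.Icc (a i) (b i) := by
  refine ⟨6, by norm_num, fun d hd ε ⟨hε0, hε1⟩ => ?_⟩
  rcases hd.eq_or_lt with rfl | hd2
  · obtain ⟨P, hP, hcard, hhit⟩ := exists_unitCube_net_one_dim hε0
    exact ⟨P, hP, by simpa using hcard, hhit⟩
  obtain ⟨q, hq, hdq, hq2d⟩ := Nat.bertrand d (by omega)
  have := Fact.mk hq
  obtain ⟨M, hqM, hMq⟩ := exists_nat_pow_near (x := (2 : ℝ) ^ d / ε) (y := q)
    ((one_le_div hε0).2 (hε1.le.trans (one_le_pow₀ one_le_two))) (by exact_mod_cast hq.one_lt)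
  refine ⟨faureNet q d (d + (M + 1)), faureNet_subset_unitCube, ?_, fun a b hsub hvol => ?_⟩
  · calc (#(faureNet q d (d + (M + 1))) : ℝ) ≤ (q : ℝ) ^ (d + (M + 1)) := by
          exact_mod_cast card_faureNet_le
      _ = q ^ (d + 1) * q ^ M := by ring
      _ ≤ q ^ (d + 1) * (2 ^ d / ε) := by gcongr
      _ = ((q ^ (d + 1) * 2 ^ d : ℕ) : ℝ) / ε := by push_cast; ring
      _ ≤ (d : ℝ) ^ (4 * d) / ε := by gcongr; exact_mod_cast pow_succ_mul_two_pow_le hd2 hq2d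
      _ ≤ 2 ^ (6 * d * Real.log d) / ε := by gcongr; exact natCast_pow_le_two_rpow hd
  · obtain ⟨k, t, hk, ht⟩ := exists_qadic_box_subset hq.one_lt hε0 (M := M + 1)
      ((div_lt_iff₀ hε0).1 hMq) hsub hvol
    obtain ⟨p, hp, hpt⟩ := exists_mem_faureNet hdq.le hk fun i => (ht i).1
    exact ⟨p, hp, fun i => ⟨(ht i).2.1.trans (hpt i).1, (hpt i).2.trans (ht i).2.2⟩⟩
end
end

section
/- Let d ≥ 2. For every ε ∈ (0,1) there exists a finite nonempty set P ⊆ ℝ^d such that every set L of lines (1-flats) in ℝ^d with the property that every compact convex set containing at least ε·|P| points of P is intersected by some line of L, satisfies |L| ≥ ⌊1/ε⌋/2. -/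
open MeasureTheory

noncomputable section

/-!
Take `n = ⌊1/ε⌋` points on a parabola. Since `ε n ≤ 1`, every single point of `P` is a compact
convex set containing at least `ε |P|` points of `P`, so each point lies on a line of `L`.
No three points of a parabola are collinear, so each line passes through at most two points
of `P`, whence `n ≤ 2 |L|`.
-/

open Finset

theorem Finset.card_le_mul_card_of_forall_exists {α β : Type*} {r : α → β → Prop}
    [DecidableRel r] {s : Finset α} {t : Finset β} {n : ℕ}
    (hcov : ∀ a ∈ s, ∃ b ∈ t, r a b) (hfib : ∀ b ∈ t, #{a ∈ s | r a b} ≤ n) :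
    #s ≤ n * #t := by
  classical
  calc #s ≤ #(t.biUnion fun b ↦ {a ∈ s | r a b}) := by
        refine card_le_card fun a ha ↦ ?_
        obtain ⟨b, hb, hab⟩ := hcov a ha
        exact mem_biUnion.2 ⟨b, hb, mem_filter.2 ⟨ha, hab⟩⟩
    _ ≤ ∑ b ∈ t, #{a ∈ s | r a b} := card_biUnion_le
    _ ≤ ∑ _b ∈ t, n := sum_le_sum hfib
    _ = n * #t := by simp [mul_comm]

section NoThreeCollinear

variable {k V P : Type*} [DivisionRing k] [AddCommGroup V] [Module k V] [AddTorsor V P]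

variable (k) in
def NoThreeCollinear (s : Set P) : Prop :=
  ∀ a ∈ s, ∀ b ∈ s, ∀ c ∈ s, a ≠ b → a ≠ c → b ≠ c → ¬Collinear k ({a, b, c} : Set P)

theorem NoThreeCollinear.mono {s t : Set P} (ht : NoThreeCollinear k t) (hst : s ⊆ t) :
    NoThreeCollinear k s :=
  fun a ha b hb c hc ↦ ht a (hst ha) b (hst hb) c (hst hc)

theorem NoThreeCollinear.card_filter_mem_le_two [DecidableEq P] {S : Finset P}
    (hS : NoThreeCollinear k (S : Set P)) {s : Set P} [DecidablePred (· ∈ s)]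
    (hs : Collinear k s) : #{p ∈ S | p ∈ s} ≤ 2 := by
  by_contra! h
  obtain ⟨a, ha, b, hb, c, hc, hab, hac, hbc⟩ := two_lt_card.1 h
  simp only [mem_filter] at ha hb hc
  refine hS a ha.1 b hb.1 c hc.1 hab hac hbc (hs.subset ?_)
  rintro x (rfl | rfl | rfl)
  exacts [ha.2, hb.2, hc.2]

end NoThreeCollinear

theorem AffineSubspace.collinear_of_finrank_direction_eq_one {k V P : Type*} [DivisionRing k]
    [AddCommGroup V] [Module k V] [AddTorsor V P] {f : AffineSubspace k P}
    (hf : Module.finrank k f.direction = 1) : Collinear k (f : Set P) := by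
  have : Module.Finite k f.direction := Module.finite_of_finrank_eq_succ hf
  rw [direction_eq_vectorSpan] at hf this
  exact collinear_iff_finrank_le_one.2 hf.le

def parabola {d : ℕ} (i j : Fin d) (t : ℝ) : EuclideanSpace ℝ (Fin d) :=
  EuclideanSpace.single i t + EuclideanSpace.single j (t ^ 2)

section Parabola

variable {d : ℕ} {i j : Fin d}

theorem parabola_apply_left (hij : i ≠ j) (t : ℝ) : parabola i j t i = t := by
  simp [parabola, hij.symm]

theorem parabola_apply_right (hij : i ≠ j) (t : ℝ) : parabola i j t j = t ^ 2 := by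
  simp [parabola, hij]

theorem parabola_injective (hij : i ≠ j) : Function.Injective (parabola i j) := by
  intro s t h
  simpa [parabola_apply_left hij] using congrArg (· i) h

theorem noThreeCollinear_range_parabola (hij : i ≠ j) :
    NoThreeCollinear ℝ (Set.range (parabola i j)) := by
  rintro _ ⟨s, rfl⟩ _ ⟨t, rfl⟩ _ ⟨u, rfl⟩ hst hsu htu hcol
  obtain ⟨v, hv⟩ := (collinear_iff_of_mem (Set.mem_insert _ _)).1 hcol
  obtain ⟨a, ha⟩ := hv (parabola i j t) (by simp)
  obtain ⟨b, hb⟩ := hv (parabola i j u) (by simp)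
  have coord (x : ℝ) (r : ℝ) (hx : parabola i j x = r • v +ᵥ parabola i j s) :
      x = r * v i + s ∧ x ^ 2 = r * v j + s ^ 2 := by
    constructor
    · simpa [parabola_apply_left hij] using congrArg (· i) hx
    · simpa [parabola_apply_right hij] using congrArg (· j) hx
  obtain ⟨ht₁, ht₂⟩ := coord t a ha
  obtain ⟨hu₁, hu₂⟩ := coord u b hb
  -- `(t - s, t² - s²)` and `(u - s, u² - s²)` are both multiples of `(v i, v j)`.
  have : (t - s) * (u - s) * (u - t) = 0 := by
    linear_combination (u ^ 2 - s ^ 2) * ht₁ + a * v i * hu₂ - (t ^ 2 - s ^ 2) * hu₁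
      - b * v i * ht₂
  simp only [mul_eq_zero, sub_eq_zero] at this
  rcases this with (h | h) | h
  exacts [hst (h ▸ rfl), hsu (h ▸ rfl), htu (h ▸ rfl)]

end Parabola

theorem exists_finset_card_eq_noThreeCollinear {d : ℕ} (hd : 2 ≤ d) (n : ℕ) :
    ∃ P : Finset (EuclideanSpace ℝ (Fin d)),
      #P = n ∧ NoThreeCollinear ℝ (P : Set (EuclideanSpace ℝ (Fin d))) := by
  let i : Fin d := ⟨0, by omega⟩
  let j : Fin d := ⟨1, by omega⟩
  have hij : i ≠ j := by simp [i, j]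
  refine ⟨(range n).image (parabola i j ∘ Nat.cast), ?_, ?_⟩
  · rw [card_image_of_injective _ ((parabola_injective hij).comp Nat.cast_injective), card_range]
  · refine (noThreeCollinear_range_parabola hij).mono ?_
    rw [coe_image]
    exact (Set.image_subset_range _ _).trans (Set.range_comp_subset_range _ _)

theorem forall_exists_mem_of_stabbing {E ι : Type*} [TopologicalSpace E] [AddCommGroup E]
    [Module ℝ E] [SetLike ι E] {P : Finset E} {L : Finset ι} {ε : ℝ} (hε : ε * #P ≤ 1)
    (hstab : ∀ C : Set E, IsCompact C → Convex ℝ C →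
      ε * (#P : ℝ) ≤ (((P : Set E) ∩ C).ncard : ℝ) → ∃ f ∈ L, (C ∩ (f : Set E)).Nonempty) :
    ∀ p ∈ P, ∃ f ∈ L, p ∈ f := by
  intro p hp
  have hcard : ((P : Set E) ∩ {p}).ncard = 1 := by
    rw [Set.inter_eq_right.2 (Set.singleton_subset_iff.2 hp), Set.ncard_singleton]
  obtain ⟨f, hf, x, rfl, hx⟩ :=
    hstab {p} isCompact_singleton (convex_singleton p) (by rw [hcard]; exact_mod_cast hε)
  exact ⟨f, hf, hx⟩

/-- A lower bound of `⌊1/ε⌋/2` for weak `(1,ε)`-nets of lines in the general (point-set)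
setting: for every `ε ∈ (0,1)` there is a finite point set `P ⊆ ℝ^d` such that any family
of lines stabbing every compact convex set containing at least `ε·|P|` points of `P` must
have at least `⌊1/ε⌋/2` lines. -/
theorem lines_lower_bound_general (d : ℕ) (hd : 2 ≤ d) (ε : ℝ)
    (hε : ε ∈ Set.Ioo (0 : ℝ) 1) :
    ∃ P : Finset (EuclideanSpace ℝ (Fin d)), P.Nonempty ∧
      ∀ L : Finset (AffineSubspace ℝ (EuclideanSpace ℝ (Fin d))),
        (∀ f ∈ L, IsKFlat d 1 f) →
        (∀ C : Set (EuclideanSpace ℝ (Fin d)), IsCompact C → Convex ℝ C →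
          ε * (P.card : ℝ) ≤ (((P : Set (EuclideanSpace ℝ (Fin d))) ∩ C).ncard : ℝ) →
          ∃ f ∈ L, (C ∩ (f : Set (EuclideanSpace ℝ (Fin d)))).Nonempty) →
        (⌊(1 : ℝ) / ε⌋₊ : ℝ) / 2 ≤ (L.card : ℝ) := by
  classical
  obtain ⟨hε₀, hε₁⟩ := hε
  set n := ⌊(1 : ℝ) / ε⌋₊
  have hn : 1 ≤ n := (Nat.one_le_floor_iff _).2 (one_le_one_div hε₀ hε₁.le)
  have hεn : ε * n ≤ 1 := (le_div_iff₀' hε₀).1 (Nat.floor_le (by positivity))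
  obtain ⟨P, hPcard, hP⟩ := exists_finset_card_eq_noThreeCollinear hd n
  refine ⟨P, card_pos.1 (hPcard ▸ hn), fun L hL hstab ↦ ?_⟩
  have hcov := forall_exists_mem_of_stabbing (by rwa [hPcard]) hstab
  have hcount : n ≤ 2 * #L := hPcard ▸ card_le_mul_card_of_forall_exists hcov fun f hf ↦
    hP.card_filter_mem_le_two (AffineSubspace.collinear_of_finrank_direction_eq_one (hL f hf).2)
  rw [div_le_iff₀ two_pos]
  exact_mod_cast (by omega : n ≤ #L * 2)
end
end
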